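/- arXiv:2311.08436 — 3 statements merged into one kernel-verified Lean document; each statement's English description precedes it below -/
import Mathlib

section
/- For every n with f(n) ≥ 2 (equivalently n ≠ 1), every coarse (f(n)−1)-wiring of X_n into Y has volume at least 2·2^{2^{2n+1}} + 1. -/
open SimpleGraph

/-- A wiring of `G` into `H`: a map on vertices together with, for each edge
(given by an ordered adjacent pair, compatibly with reversal), a walk in `H`
joining the images of the endpoints. -/
structure Wiring {V : Type*} {W : Type*} (G : SimpleGraph V) (H : SimpleGraph W) where
  toFun : V → W
  walk : ∀ u v : V, G.Adj u v → H.Walk (toFun u) (toFun v)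
  walk_symm : ∀ (u v : V) (h : G.Adj u v), walk v u (G.adj_symm h) = (walk u v h).reverse

namespace Wiring

variable {V : Type*} {W : Type*} {G : SimpleGraph V} {H : SimpleGraph W}

/-- A wiring is a coarse `k`-wiring if the vertex map is at most `k`-to-one and
every edge of `H` lies on at most `k` of the chosen walks.  (Since walks are
indexed by *ordered* adjacent pairs, with the walk of `(v,u)` the reverse of the
walk of `(u,v)`, each edge of `G` is counted twice; hence the bound `2 * k`.) -/
def IsCoarse (Wr : Wiring G H) (k : ℕ) : Prop :=
  (∀ w : W, {v : V | Wr.toFun v = w}.ncard ≤ k) ∧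
  (∀ e : Sym2 W, e ∈ H.edgeSet →
    {p : V × V | ∃ h : G.Adj p.1 p.2, e ∈ (Wr.walk p.1 p.2 h).edges}.ncard ≤ 2 * k)

/-- The vertices of the image of a wiring. -/
def imageVerts (Wr : Wiring G H) : Set W :=
  Set.range Wr.toFun ∪ {w : W | ∃ (u v : V) (h : G.Adj u v), w ∈ (Wr.walk u v h).support}

/-- The volume of a wiring: the number of vertices of its image. -/
noncomputable def volume (Wr : Wiring G H) : ℕ := Wr.imageVerts.ncard

/-- The image of a wiring, as a subgraph of the target. -/
def imageSubgraph (Wr : Wiring G H) : H.Subgraph where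
  verts := Wr.imageVerts
  Adj w w' := ∃ (u v : V) (h : G.Adj u v), (Wr.walk u v h).toSubgraph.Adj w w'
  adj_sub := by
    rintro a b ⟨u, v, h, ha⟩
    exact (Wr.walk u v h).toSubgraph.adj_sub ha
  edge_vert := by
    rintro a b ⟨u, v, h, ha⟩
    refine Or.inr ⟨u, v, h, ?_⟩
    have := (Wr.walk u v h).toSubgraph.edge_vert ha
    rwa [SimpleGraph.Walk.verts_toSubgraph] at this
  symm := by
    constructor
    rintro a b ⟨u, v, h, ha⟩
    exact ⟨u, v, h, ha.symm⟩

end Wiring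

/-- `wir k G H` : the minimal volume of a coarse `k`-wiring of `G` into `H`
(`⊤` if there is none). -/
noncomputable def wir {V : Type*} {W : Type*} (k : ℕ)
    (G : SimpleGraph V) (H : SimpleGraph W) : ℕ∞ :=
  sInf {N : ℕ∞ | ∃ Wr : Wiring G H, Wr.IsCoarse k ∧ N = (Wr.volume : ℕ∞)}

/-- The `k`-wiring profile of `X` into `H`. -/
noncomputable def wirProfile {V : Type*} {W : Type*}
    (X : SimpleGraph V) (H : SimpleGraph W) (k n : ℕ) : ℕ∞ :=
  sSup {N : ℕ∞ | ∃ Γ : X.Subgraph, Γ.verts.Finite ∧ Γ.verts.ncard ≤ n ∧ N = wir k Γ.coe H}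

/-- One-directional adjacency generating the 2-dimensional integer grid. -/
def gridStep (p q : ℤ × ℤ) : Prop :=
  (p.1 = q.1 ∧ q.2 = p.2 + 1) ∨ (p.2 = q.2 ∧ q.1 = p.1 + 1)

/-- The 2-dimensional integer grid: vertices `ℤ²`, edges between points at distance 1. -/
def grid : SimpleGraph (ℤ × ℤ) where
  Adj p q := p ≠ q ∧ (gridStep p q ∨ gridStep q p)
  symm := ⟨fun p q h => ⟨h.1.symm, h.2.symm⟩⟩
  loopless := ⟨fun p h => h.1 rfl⟩

/-- One-directional adjacency for the column graphs: vertical steps everywhere,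
horizontal steps at heights divisible by `t`. -/
def colStep (t : ℕ) (p q : ℕ × ℕ) : Prop :=
  (p.1 = q.1 ∧ q.2 = p.2 + 1) ∨ (p.2 = q.2 ∧ t ∣ p.2 ∧ q.1 = p.1 + 1)

/-- Vertices of `X_n`. -/
def XVert (f : ℕ → ℕ) (n : ℕ) : Type :=
  {p : ℕ × ℕ // p.1 < f n ∧ p.2 ≤ 2 ^ 2 ^ (2 * n) * f n}

/-- The graph `X_n`. -/
def Xgraph (f : ℕ → ℕ) (n : ℕ) : SimpleGraph (XVert f n) where
  Adj u v := u ≠ v ∧ (colStep (2 ^ 2 ^ (2 * n)) u.val v.val ∨ colStep (2 ^ 2 ^ (2 * n)) v.val u.val)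
  symm := ⟨fun u v h => ⟨h.1.symm, h.2.symm⟩⟩
  loopless := ⟨fun u h => h.1 rfl⟩

/-- Vertices of `Y_n`. -/
def YVert (f : ℕ → ℕ) (n : ℕ) : Type :=
  {p : ℕ × ℕ // p.1 < f n ∧ p.2 ≤ 2 ^ 2 ^ (2 * n + 1) * f n}

/-- The graph `Y_n`. -/
def Ygraph (f : ℕ → ℕ) (n : ℕ) : SimpleGraph (YVert f n) where
  Adj u v := u ≠ v ∧
    (colStep (2 ^ 2 ^ (2 * n + 1)) u.val v.val ∨ colStep (2 ^ 2 ^ (2 * n + 1)) v.val u.val)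
  symm := ⟨fun u v h => ⟨h.1.symm, h.2.symm⟩⟩
  loopless := ⟨fun u h => h.1 rfl⟩

/-- Vertices of `X = ⨆ (n ≥ 1) X_n`: triples `(n, i, j)` with `(i,j)` a vertex of `X_n`. -/
def XTVert (f : ℕ → ℕ) : Type :=
  {p : ℕ × ℕ × ℕ // 1 ≤ p.1 ∧ p.2.1 < f p.1 ∧ p.2.2 ≤ 2 ^ 2 ^ (2 * p.1) * f p.1}

/-- The graph `X`, the disjoint union of the `X_n` for `n ≥ 1`. -/
def Xtotal (f : ℕ → ℕ) : SimpleGraph (XTVert f) where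
  Adj u v := u ≠ v ∧ u.val.1 = v.val.1 ∧
    (colStep (2 ^ 2 ^ (2 * u.val.1)) u.val.2 v.val.2 ∨
     colStep (2 ^ 2 ^ (2 * u.val.1)) v.val.2 u.val.2)
  symm := ⟨fun u v h => ⟨h.1.symm, h.2.1.symm, by rw [← h.2.1]; exact h.2.2.symm⟩⟩
  loopless := ⟨fun u h => h.1 rfl⟩

/-- Vertices of `Y = ⨆ (n ≥ 1) Y_n`. -/
def YTVert (f : ℕ → ℕ) : Type :=
  {p : ℕ × ℕ × ℕ // 1 ≤ p.1 ∧ p.2.1 < f p.1 ∧ p.2.2 ≤ 2 ^ 2 ^ (2 * p.1 + 1) * f p.1}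

/-- The graph `Y`, the disjoint union of the `Y_n` for `n ≥ 1`. -/
def Ytotal (f : ℕ → ℕ) : SimpleGraph (YTVert f) where
  Adj u v := u ≠ v ∧ u.val.1 = v.val.1 ∧
    (colStep (2 ^ 2 ^ (2 * u.val.1 + 1)) u.val.2 v.val.2 ∨
     colStep (2 ^ 2 ^ (2 * u.val.1 + 1)) v.val.2 u.val.2)
  symm := ⟨fun u v h => ⟨h.1.symm, h.2.1.symm, by rw [← h.2.1]; exact h.2.2.symm⟩⟩
  loopless := ⟨fun u h => h.1 rfl⟩

/-!
The walks of a wiring `g` of `X_n` span a subgraph `Γ` of `Y`. Since `X_n` is connected, `Γ` lies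
in one component `Y_m`, and since every vertex of `Y` receives at most `f n - 1` vertices of
`X_n`, the component `Y_m` is too small unless `m ≥ n`.

If `Γ` contains a cycle, all its vertices belong to the image. A cycle of `Y_m` has horizontal
edges at its lowest and at its highest level, both multiples of `2 ^ 2 ^ (2m + 1)`, so its length
exceeds `2 · 2 ^ 2 ^ (2m + 1)`.

If `Γ` is a forest, every edge `e` of `Γ` splits `X_n` according to the side of `e` on which the
images lie, and by the congestion bound at most `f n - 1` edges of `X_n` cross this cut. Such a
cut leaves a column and a row of `X_n` unmixed, so one side contains at most `(f n - 1)² / 4` of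
the `f n (f n + 1)` rungs (the vertices at heights divisible by `2 ^ 2 ^ (2n)`). At a median of
the images of the rungs every branch of `Γ` is small; as `Y` has degree at most four, there are
at most `(f n - 1) + 4 · (f n - 1)² / 4` rungs, a contradiction.
-/

namespace SimpleGraph

variable {W : Type*} {G : SimpleGraph W}

def branch (G : SimpleGraph W) (a b : W) : Set W :=
  {z | (G.deleteEdges {s(a, b)}).Reachable b z}

lemma mem_branch {a b z : W} : z ∈ G.branch a b ↔ (G.deleteEdges {s(a, b)}).Reachable b z :=
  Iff.rfl

lemma deleteEdges_swap (a b : W) : G.deleteEdges {s(a, b)} = G.deleteEdges {s(b, a)} := by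
  rw [Sym2.eq_swap]

lemma reachable_deleteEdges_or_of_walk (a b : W) :
    ∀ {y : W}, G.Walk y a →
      (G.deleteEdges {s(a, b)}).Reachable y a ∨ (G.deleteEdges {s(a, b)}).Reachable y b
  | _, .nil => .inl .rfl
  | y, .cons (v := c) h p => by
    by_cases he : s(y, c) = s(a, b)
    · rcases Sym2.eq_iff.mp he with ⟨rfl, -⟩ | ⟨rfl, -⟩
      · exact .inl .rfl
      · exact .inr .rfl
    · have hyc : (G.deleteEdges {s(a, b)}).Adj y c := by simp [h, he]
      exact (reachable_deleteEdges_or_of_walk a b p).imp hyc.reachable.trans hyc.reachable.trans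

lemma Reachable.mem_branch_or_mem_branch {a z : W} (b : W) (h : G.Reachable a z) :
    z ∈ G.branch b a ∨ z ∈ G.branch a b := by
  obtain ⟨p⟩ := h
  rw [mem_branch, mem_branch, deleteEdges_swap b a]
  exact (reachable_deleteEdges_or_of_walk a b p.reverse).imp Reachable.symm Reachable.symm

lemma IsBridge.disjoint_branch {a b : W} (h : G.IsBridge s(a, b)) :
    Disjoint (G.branch b a) (G.branch a b) := by
  rw [Set.disjoint_left]
  intro z hza hzb
  rw [mem_branch, deleteEdges_swap b a] at hza
  exact isBridge_iff.mp h (hza.trans hzb.symm)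

lemma IsBridge.mem_edges_of_mem_branch {a b x y : W} (h : G.IsBridge s(a, b))
    (hx : x ∈ G.branch b a) (hy : y ∈ G.branch a b) (p : G.Walk x y) : s(a, b) ∈ p.edges := by
  refine p.mem_edges_of_not_reachable_deleteEdges fun hxy => ?_
  rw [mem_branch, deleteEdges_swap b a] at hx
  exact isBridge_iff.mp h ((hx.trans hxy).trans hy.symm)

lemma IsBridge.dist_eq_add_one {a b z : W} (hab : G.Adj a b) (h : G.IsBridge s(a, b))
    (hz : z ∈ G.branch b a) : G.dist z b = G.dist z a + 1 := by
  classical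
  have hza : G.Reachable z a := by
    rw [mem_branch] at hz
    exact (hz.mono (deleteEdges_le _)).symm
  obtain ⟨p, hp⟩ := hza.exists_walk_length_eq_dist
  obtain ⟨q, hq⟩ := (hza.trans hab.reachable).exists_walk_length_eq_dist
  have hle : G.dist z b ≤ G.dist z a + 1 := by
    simpa [hp] using dist_le (p.concat hab)
  have haq : a ∈ q.support :=
    q.fst_mem_support_of_mem_edges (h.mem_edges_of_mem_branch hz
      (show b ∈ G.branch a b from Reachable.rfl) q)
  have hdrop : (q.dropUntil a haq).length ≠ 0 := fun h0 =>
    hab.ne (Walk.eq_of_length_eq_zero h0)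
  have hsplit := congrArg Walk.length (q.take_spec haq)
  rw [Walk.length_append] at hsplit
  have := dist_le (q.takeUntil a haq)
  omega

lemma Reachable.exists_adj_mem_branch {w z : W} (h : G.Reachable w z) (hne : z ≠ w) :
    ∃ x, G.Adj w x ∧ z ∈ G.branch w x := by
  classical
  obtain ⟨p⟩ := h
  obtain ⟨x, hwx, q, hq⟩ := Walk.exists_eq_cons_of_ne hne.symm p.toPath.val
  have hw : w ∉ q.support := by
    have hnd := p.toPath.prop.support_nodup
    rw [hq, Walk.support_cons] at hnd
    exact (List.nodup_cons.mp hnd).1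
  exact ⟨x, hwx, reachable_deleteEdges_iff_exists_walk.mpr
    ⟨q, fun he => hw (q.fst_mem_support_of_mem_edges he)⟩⟩

open Finset in
open scoped Classical in
/-- Take a vertex `w` minimising the total distance to the points: moving across an edge whose far
side holds more than `c` of them would decrease that total. -/
lemma IsAcyclic.exists_forall_card_branch_le (hG : G.IsAcyclic) {ι : Type*} (R : Finset ι)
    (φ : ι → W) {w₀ : W} (hR : ∀ i ∈ R, G.Reachable w₀ (φ i)) (c : ℕ)
    (hcut : ∀ a b, G.Adj a b → G.Reachable w₀ a →
      #{i ∈ R | φ i ∈ G.branch b a} ≤ c ∨ #{i ∈ R | φ i ∈ G.branch a b} ≤ c) :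
    ∃ w, G.Reachable w₀ w ∧ ∀ x, G.Adj w x → #{i ∈ R | φ i ∈ G.branch w x} ≤ c := by
  set μ : W → ℕ := fun z => ∑ i ∈ R, G.dist (φ i) z
  obtain ⟨w, hw, hmin⟩ :=
    (InvImage.wf μ wellFounded_lt).has_min {z | G.Reachable w₀ z} ⟨w₀, .rfl⟩
  refine ⟨w, hw, fun x hwx => not_lt.mp fun hfar => ?_⟩
  have hbr := isAcyclic_iff_forall_adj_isBridge.mp hG hwx
  have hbr' : G.IsBridge s(x, w) := by rwa [Sym2.eq_swap]
  have hnear : #{i ∈ R | φ i ∈ G.branch x w} ≤ c := (hcut w x hwx hw).resolve_right hfar.not_ge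
  have hside : ∀ i ∈ R, G.dist (φ i) x + (if φ i ∈ G.branch w x then 1 else 0) =
      G.dist (φ i) w + (if φ i ∈ G.branch x w then 1 else 0) := by
    intro i hi
    rcases (hw.symm.trans (hR i hi)).mem_branch_or_mem_branch x with hW | hX
    · rw [if_neg (Set.disjoint_left.mp hbr.disjoint_branch hW), if_pos hW,
        hbr.dist_eq_add_one hwx hW]
    · rw [if_pos hX, if_neg (Set.disjoint_right.mp hbr.disjoint_branch hX),
        hbr'.dist_eq_add_one hwx.symm hX]
  have hsum := Finset.sum_congr rfl hside
  simp only [Finset.sum_add_distrib, Finset.sum_boole, Nat.cast_id] at hsum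
  have key : μ x + #{i ∈ R | φ i ∈ G.branch w x} = μ w + #{i ∈ R | φ i ∈ G.branch x w} := by
    convert hsum
  exact hmin x (hw.trans hwx.reachable) (show μ x < μ w by omega)

open Finset in
open scoped Classical in
lemma card_le_card_fiber_add_mul {ι : Type*} (R : Finset ι) (φ : ι → W) {w : W} {c d : ℕ}
    (hR : ∀ i ∈ R, G.Reachable w (φ i)) (hdeg : (G.neighborSet w).encard ≤ d)
    (hw : ∀ x, G.Adj w x → #{i ∈ R | φ i ∈ G.branch w x} ≤ c) :
    #R ≤ #{i ∈ R | φ i = w} + d * c := by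
  have hfin : (G.neighborSet w).Finite := Set.finite_of_encard_le_coe hdeg
  set N := hfin.toFinset
  have hN : #N ≤ d := by
    rw [← Nat.cast_le (α := ℕ∞), ← hfin.encard_eq_coe_toFinset_card]
    exact hdeg
  have hcover : R ⊆ {i ∈ R | φ i = w} ∪ N.biUnion fun x => {i ∈ R | φ i ∈ G.branch w x} := by
    intro i hi
    by_cases hiw : φ i = w
    · exact mem_union_left _ (mem_filter.mpr ⟨hi, hiw⟩)
    · obtain ⟨x, hwx, hx⟩ := (hR i hi).exists_adj_mem_branch hiw
      exact mem_union_right _ (mem_biUnion.mpr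
        ⟨x, hfin.mem_toFinset.mpr hwx, mem_filter.mpr ⟨hi, hx⟩⟩)
  calc #R ≤ #{i ∈ R | φ i = w} + ∑ x ∈ N, #{i ∈ R | φ i ∈ G.branch w x} :=
        (card_le_card hcover).trans ((card_union_le _ _).trans (by gcongr; exact card_biUnion_le))
    _ ≤ #{i ∈ R | φ i = w} + #N * c := by
        gcongr
        simpa using sum_le_card_nsmul N _ c fun x hx => hw x (hfin.mem_toFinset.mp hx)
    _ ≤ #{i ∈ R | φ i = w} + d * c := by gcongr

lemma Walk.IsCycle.exists_ne_mem_edges {z x : W} {c : G.Walk z z} (hc : c.IsCycle)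
    (hx : x ∈ c.support) : ∃ u₁ u₂, u₁ ≠ u₂ ∧ s(x, u₁) ∈ c.edges ∧ s(x, u₂) ∈ c.edges := by
  obtain ⟨u₁, u₂, hne, hset⟩ := Set.ncard_eq_two.mp (hc.ncard_neighborSet_toSubgraph_eq_two hx)
  have hmem : ∀ u ∈ c.toSubgraph.neighborSet x, s(x, u) ∈ c.edges := fun u hu =>
    Walk.adj_toSubgraph_iff_mem_edges.mp hu
  exact ⟨u₁, u₂, hne, hmem _ (by simp [hset]), hmem _ (by simp [hset])⟩

lemma Walk.IsCycle.exists_mem_edges_of_subsingleton {z x : W} {c : G.Walk z z} (hc : c.IsCycle)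
    (hx : x ∈ c.support) (P : W → Prop)
    (hP : {u | G.Adj x u ∧ u ∈ c.support ∧ ¬P u}.Subsingleton) :
    ∃ u, s(x, u) ∈ c.edges ∧ P u := by
  obtain ⟨u₁, u₂, hne, h₁, h₂⟩ := hc.exists_ne_mem_edges hx
  by_contra! h
  exact hne (hP ⟨c.adj_of_mem_edges h₁, c.snd_mem_support_of_mem_edges h₁, h u₁ h₁⟩
    ⟨c.adj_of_mem_edges h₂, c.snd_mem_support_of_mem_edges h₂, h u₂ h₂⟩)

lemma Subgraph.length_le_ncard_verts_of_isCycle {H : SimpleGraph W} (S : H.Subgraph)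
    (hS : S.verts.Finite) {z : W} {c : S.spanningCoe.Walk z z} (hc : c.IsCycle) :
    c.length ≤ S.verts.ncard := by
  classical
  have hsub : (c.support.tail.toFinset : Set W) ⊆ S.verts := by
    intro x hx
    obtain ⟨u, -, -, hu, -⟩ :=
      hc.exists_ne_mem_edges (List.mem_of_mem_tail (List.mem_toFinset.mp hx))
    exact S.edge_vert (c.adj_of_mem_edges hu)
  calc c.length = c.support.tail.toFinset.card := by
        rw [List.toFinset_card_of_nodup hc.support_nodup, List.length_tail, Walk.length_support]
        rfl
    _ ≤ S.verts.ncard := by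
        rw [← Set.ncard_coe_finset]
        exact Set.ncard_le_ncard hsub hS

lemma Walk.add_countP_le_add_length (h : W → ℕ) (hh : ∀ u v, G.Adj u v → h v ≤ h u + 1)
    {x y : W} (p : G.Walk x y) :
    h y + p.darts.countP (fun d => h d.fst = h d.snd) ≤ h x + p.length ∧
      h x + p.darts.countP (fun d => h d.fst = h d.snd) ≤ h y + p.length := by
  induction p with
  | nil => simp
  | @cons x u y hxu q ih =>
    have h₁ := hh x u hxu
    have h₂ := hh u x hxu.symm
    simp only [Walk.darts_cons, List.countP_cons, Walk.length_cons, decide_eq_true_eq]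
    split_ifs <;> omega

lemma Walk.two_mul_add_countP_le_length (h : W → ℕ) (hh : ∀ u v, G.Adj u v → h v ≤ h u + 1)
    {z x y : W} (c : G.Walk z z) (hx : x ∈ c.support) (hy : y ∈ c.support) :
    2 * h y + c.darts.countP (fun d => h d.fst = h d.snd) ≤ 2 * h x + c.length := by
  classical
  set c' := c.rotate x hx
  have hy' : y ∈ c'.support := (c.mem_support_rotate_iff x hx).mpr hy
  have hcount : c'.darts.countP (fun d => h d.fst = h d.snd) =
      c.darts.countP (fun d => h d.fst = h d.snd) :=
    (c.rotate_darts x hx).perm.countP_eq _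
  have hsplit := c'.take_spec hy'
  have hlen := congrArg Walk.length hsplit
  have hdarts := congrArg (fun p => p.darts.countP (fun d => h d.fst = h d.snd)) hsplit
  simp only [Walk.length_append, Walk.darts_append, List.countP_append] at hlen hdarts
  have hrot : c'.length = c.length := c.length_rotate x hx
  have h₁ := (Walk.add_countP_le_add_length h hh (c'.takeUntil y hy')).1
  have h₂ := (Walk.add_countP_le_add_length h hh (c'.dropUntil y hy')).2
  omega

end SimpleGraph

namespace Wiring

open Finset

variable {V W : Type*} {G : SimpleGraph V} {H : SimpleGraph W} (g : Wiring G H)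

lemma walk_edges_subset {u v : V} (h : G.Adj u v) :
    ∀ e ∈ (g.walk u v h).edges, e ∈ g.imageSubgraph.spanningCoe.edgeSet := by
  intro e he
  induction e using Sym2.ind with
  | _ a b => exact ⟨u, v, h, Walk.adj_toSubgraph_iff_mem_edges.mpr he⟩

lemma reachable_imageSubgraph {u v : V} (huv : G.Reachable u v) :
    g.imageSubgraph.spanningCoe.Reachable (g.toFun u) (g.toFun v) := by
  obtain ⟨p⟩ := huv
  induction p with
  | nil => exact .rfl
  | cons h _ ih => exact Reachable.trans ⟨(g.walk _ _ h).transfer _ (g.walk_edges_subset h)⟩ ih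

lemma reachable_of_mem_imageVerts (hG : G.Preconnected) (u : V) {z : W}
    (hz : z ∈ g.imageVerts) : H.Reachable (g.toFun u) z := by
  classical
  rcases hz with ⟨v, rfl⟩ | ⟨v, v', h, hz⟩
  · exact (g.reachable_imageSubgraph (hG u v)).mono (Subgraph.spanningCoe_le _)
  · exact ((g.reachable_imageSubgraph (hG u v)).mono (Subgraph.spanningCoe_le _)).trans
      ⟨(g.walk v v' h).takeUntil z hz⟩

lemma imageVerts_finite [Finite V] : g.imageVerts.Finite := by
  classical
  refine (Set.finite_range g.toFun).union ?_
  have hsub : {w | ∃ (u v : V) (h : G.Adj u v), w ∈ (g.walk u v h).support} ⊆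
      ⋃ p : V × V, ⋃ h : G.Adj p.1 p.2, {w | w ∈ (g.walk p.1 p.2 h).support} := by
    rintro w ⟨u, v, h, hw⟩
    exact Set.mem_iUnion₂.mpr ⟨(u, v), h, hw⟩
  exact (Set.finite_iUnion fun p : V × V => Set.finite_iUnion fun h =>
    (g.walk p.1 p.2 h).support.finite_toSet).subset hsub

lemma card_le_mul_volume [Finite V] {k : ℕ} (hg : g.IsCoarse k) :
    Nat.card V ≤ k * g.volume := by
  classical
  have := Fintype.ofFinite V
  have hfib : ∀ w ∈ Finset.univ.image g.toFun, #{v | g.toFun v = w} ≤ k := by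
    intro w _
    simpa [← Set.ncard_coe_finset] using hg.1 w
  have himage : (Finset.univ.image g.toFun).card ≤ g.volume := by
    rw [volume, ← Set.ncard_coe_finset]
    exact Set.ncard_le_ncard (by simp [imageVerts]) g.imageVerts_finite
  calc Nat.card V = Finset.univ.card := by simp
    _ ≤ k * (Finset.univ.image g.toFun).card := Finset.card_le_mul_card_image _ k hfib
    _ ≤ k * g.volume := Nat.mul_le_mul_left _ himage

lemma mem_walk_edges_of_mem_branch {a b : W}
    (hbr : g.imageSubgraph.spanningCoe.IsBridge s(a, b)) {u v : V} (h : G.Adj u v)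
    (hu : g.toFun u ∈ g.imageSubgraph.spanningCoe.branch b a)
    (hv : g.toFun v ∈ g.imageSubgraph.spanningCoe.branch a b) :
    s(a, b) ∈ (g.walk u v h).edges := by
  have := hbr.mem_edges_of_mem_branch hu hv ((g.walk u v h).transfer _ (g.walk_edges_subset h))
  rwa [Walk.edges_transfer] at this

/-- Both orientations of every edge of `G` crossing the cut are routed through the edge `ab`
of the image, and the congestion bound allows at most `2 * k` of them. -/
lemma card_interedges_le [Fintype V] [DecidableEq V] [DecidableRel G.Adj] {k : ℕ}
    (hg : g.IsCoarse k) {a b : W} (hab : g.imageSubgraph.Adj a b)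
    (hbr : g.imageSubgraph.spanningCoe.IsBridge s(a, b)) (S : Finset V)
    (hS : ∀ v ∈ S, g.toFun v ∈ g.imageSubgraph.spanningCoe.branch b a)
    (hSc : ∀ v ∉ S, g.toFun v ∈ g.imageSubgraph.spanningCoe.branch a b) :
    #(G.interedges S Sᶜ) ≤ k := by
  set I := G.interedges S Sᶜ
  set C := {p : V × V | ∃ h : G.Adj p.1 p.2, s(a, b) ∈ (g.walk p.1 p.2 h).edges}
  have hIC : (I : Set (V × V)) ⊆ C := by
    rintro ⟨u, v⟩ huv
    obtain ⟨hu, hv, h⟩ := G.mk_mem_interedges_iff.mp huv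
    exact ⟨h, g.mem_walk_edges_of_mem_branch hbr h (hS u hu) (hSc v (mem_compl.mp hv))⟩
  have hIC' : ((I.image Prod.swap : Finset (V × V)) : Set (V × V)) ⊆ C := by
    simp only [coe_image, Set.image_subset_iff]
    rintro ⟨u, v⟩ huv
    obtain ⟨hu, hv, h⟩ := G.mk_mem_interedges_iff.mp huv
    refine ⟨h.symm, ?_⟩
    simp only [Prod.fst_swap, Prod.snd_swap, g.walk_symm u v h, Walk.edges_reverse,
      List.mem_reverse]
    exact g.mem_walk_edges_of_mem_branch hbr h (hS u hu) (hSc v (mem_compl.mp hv))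
  have hdisj : Disjoint I (I.image Prod.swap) := by
    rw [Finset.disjoint_left]
    rintro ⟨u, v⟩ huv hvu
    obtain ⟨⟨v', u'⟩, hvu', he⟩ := mem_image.mp hvu
    simp only [Prod.swap_prod_mk, Prod.mk.injEq] at he
    obtain ⟨rfl, rfl⟩ := he
    exact mem_compl.mp (G.mk_mem_interedges_iff.mp hvu').2.1 (G.mk_mem_interedges_iff.mp huv).1
  have hcard : #I + #I ≤ 2 * k := by
    calc #I + #I = #(I ∪ I.image Prod.swap) := by
          rw [card_union_of_disjoint hdisj, card_image_of_injective _ Prod.swap_injective]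
      _ = (↑(I ∪ I.image Prod.swap) : Set (V × V)).ncard := (Set.ncard_coe_finset _).symm
      _ ≤ C.ncard := Set.ncard_le_ncard (by rw [coe_union]; exact Set.union_subset hIC hIC')
      _ ≤ 2 * k := hg.2 _ (g.imageSubgraph.adj_sub hab)
  omega

open scoped Classical in
/-- Every edge of the image forest induces a cut of `G` crossed by at most `k` edges; at the vertex
`w` given by `exists_forall_card_branch_le`, `R` is covered by the fibre over `w` and the at most
`d` branches at `w`. -/
theorem card_le_of_isAcyclic [Fintype V] {k d : ℕ} (hg : g.IsCoarse k) (hG : G.Preconnected)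
    (hΓ : g.imageSubgraph.spanningCoe.IsAcyclic) (hdeg : ∀ w, (H.neighborSet w).encard ≤ d)
    (R : Finset V) (c : ℕ)
    (hcut : ∀ S : Finset V, #(G.interedges S Sᶜ) ≤ k → #(R ∩ S) ≤ c ∨ #(R \ S) ≤ c) :
    #R ≤ k + d * c := by
  set Γ := g.imageSubgraph.spanningCoe
  rcases R.eq_empty_or_nonempty with rfl | ⟨r, -⟩
  · simp
  have hreach : ∀ v, Γ.Reachable (g.toFun r) (g.toFun v) := fun v =>
    g.reachable_imageSubgraph (hG r v)
  have hcut' : ∀ a b, Γ.Adj a b → Γ.Reachable (g.toFun r) a →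
      #{v ∈ R | g.toFun v ∈ Γ.branch b a} ≤ c ∨ #{v ∈ R | g.toFun v ∈ Γ.branch a b} ≤ c := by
    intro a b hab ha
    have hbr := isAcyclic_iff_forall_adj_isBridge.mp hΓ hab
    set S : Finset V := {v | g.toFun v ∈ Γ.branch b a}
    have hSc : ∀ v ∉ S, g.toFun v ∈ Γ.branch a b := fun v hv =>
      ((ha.symm.trans (hreach v)).mem_branch_or_mem_branch b).resolve_left (by simpa [S] using hv)
    have hRS : R \ S = {v ∈ R | g.toFun v ∈ Γ.branch a b} := by
      ext v
      simp only [mem_sdiff, mem_filter, S, mem_univ, true_and]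
      exact and_congr_right fun _ => ⟨fun hv => hSc v (by simpa [S] using hv),
        fun hv => Set.disjoint_right.mp hbr.disjoint_branch hv⟩
    have hRS' : R ∩ S = {v ∈ R | g.toFun v ∈ Γ.branch b a} := by
      ext v; simp [S]
    rw [← hRS, ← hRS']
    exact hcut S (g.card_interedges_le hg hab hbr S (fun v hv => by simpa [S] using hv) hSc)
  obtain ⟨w, hrw, hw⟩ := hΓ.exists_forall_card_branch_le R g.toFun (fun v _ => hreach v) c hcut'
  have hfib : #{v ∈ R | g.toFun v = w} ≤ k := by
    refine le_trans ?_ (hg.1 w)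
    rw [← Set.ncard_coe_finset]
    exact Set.ncard_le_ncard (by intro v; simp +contextual) (Set.toFinite _)
  have hdegΓ : (Γ.neighborSet w).encard ≤ d :=
    (Set.encard_le_encard fun x hx => g.imageSubgraph.adj_sub hx).trans (hdeg w)
  have := card_le_card_fiber_add_mul R g.toFun (fun v _ => hrw.symm.trans (hreach v)) hdegΓ hw
  omega

end Wiring

open Finset in
lemma SimpleGraph.exists_mem_interedges_of_pathGraph {V : Type*} {G : SimpleGraph V}
    [Fintype V] [DecidableEq V] [DecidableRel G.Adj] {m : ℕ} (φ : pathGraph m →g G)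
    (S : Finset V) {x y : Fin m} (h : ¬(φ x ∈ S ↔ φ y ∈ S)) :
    ∃ x' y' : Fin m, (φ x', φ y') ∈ G.interedges S Sᶜ := by
  have key : ∀ x y : Fin m, φ x ∈ S → φ y ∉ S →
      ∃ x' y' : Fin m, (φ x', φ y') ∈ G.interedges S Sᶜ := by
    intro x y hx hy
    obtain ⟨p⟩ := pathGraph_preconnected m x y
    obtain ⟨d, -, hd₁, hd₂⟩ := p.exists_boundary_dart {z | φ z ∈ S} hx hy
    exact ⟨d.fst, d.snd, G.mk_mem_interedges_iff.mpr ⟨hd₁, mem_compl.mpr hd₂, φ.map_adj d.adj⟩⟩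
  by_cases hx : φ x ∈ S
  · exact key x y hx (fun hy => h ⟨fun _ => hy, fun _ => hx⟩)
  · have hy : φ y ∈ S := by tauto
    exact key y x hy hx

namespace XVert

variable {f : ℕ → ℕ} {n : ℕ}

lemma ext' {u v : XVert f n} (h₁ : u.1.1 = v.1.1) (h₂ : u.1.2 = v.1.2) : u = v :=
  Subtype.ext (Prod.ext h₁ h₂)

def equivFin (f : ℕ → ℕ) (n : ℕ) : XVert f n ≃ Fin (f n) × Fin (2 ^ 2 ^ (2 * n) * f n + 1) where
  toFun v := (⟨v.1.1, v.2.1⟩, ⟨v.1.2, Nat.lt_succ_of_le v.2.2⟩)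
  invFun p := ⟨(p.1, p.2), p.1.2, Nat.le_of_lt_succ p.2.2⟩
  left_inv _ := rfl
  right_inv _ := rfl

instance : Fintype (XVert f n) := Fintype.ofEquiv _ (equivFin f n).symm

lemma card_eq (f : ℕ → ℕ) (n : ℕ) :
    Fintype.card (XVert f n) = f n * (2 ^ 2 ^ (2 * n) * f n + 1) := by
  simp [Fintype.card_congr (equivFin f n)]

end XVert

namespace Xgraph

open Finset
open scoped Classical

variable {f : ℕ → ℕ} {n : ℕ}

def column (i : ℕ) (hi : i < f n) : pathGraph (2 ^ 2 ^ (2 * n) * f n + 1) →g Xgraph f n where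
  toFun j := ⟨(i, j), hi, Nat.le_of_lt_succ j.2⟩
  map_rel' {j j'} h := by
    refine ⟨fun he => ?_, ?_⟩
    · exact h.ne (Fin.ext (congrArg (fun v : XVert f n => v.1.2) he))
    · rcases pathGraph_adj.mp h with h | h
      · exact .inl (.inl ⟨rfl, h.symm⟩)
      · exact .inr (.inl ⟨rfl, h.symm⟩)

def row (l : ℕ) (hl : l ≤ f n) : pathGraph (f n) →g Xgraph f n where
  toFun i := ⟨(i, 2 ^ 2 ^ (2 * n) * l), i.2, Nat.mul_le_mul_left _ hl⟩
  map_rel' {i i'} h := by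
    refine ⟨fun he => ?_, ?_⟩
    · exact h.ne (Fin.ext (congrArg (fun v : XVert f n => v.1.1) he))
    · rcases pathGraph_adj.mp h with h | h
      · exact .inl (.inr ⟨rfl, dvd_mul_right _ _, h.symm⟩)
      · exact .inr (.inr ⟨rfl, dvd_mul_right _ _, h.symm⟩)

@[simp]
lemma row_apply (l : ℕ) (hl : l ≤ f n) (i) : (row l hl i).1 = (i.val, 2 ^ 2 ^ (2 * n) * l) :=
  rfl

lemma preconnected : (Xgraph f n).Preconnected := by
  have hbase : ∀ v : XVert f n,
      (Xgraph f n).Reachable v (row 0 (Nat.zero_le _) ⟨v.1.1, v.2.1⟩) := by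
    intro v
    have h₁ : column v.1.1 v.2.1 ⟨v.1.2, Nat.lt_succ_of_le v.2.2⟩ = v := rfl
    have h₂ : column v.1.1 v.2.1 0 = row 0 (Nat.zero_le _) ⟨v.1.1, v.2.1⟩ :=
      XVert.ext' rfl (Nat.mul_zero _).symm
    have := ((pathGraph_preconnected _) ⟨v.1.2, Nat.lt_succ_of_le v.2.2⟩ 0).map
      (column v.1.1 v.2.1)
    rwa [h₁, h₂] at this
  intro u v
  refine (hbase u).trans (Reachable.trans ?_ (hbase v).symm)
  exact (pathGraph_preconnected _ _ _).map (row 0 (Nat.zero_le _))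

noncomputable def rungs (f : ℕ → ℕ) (n : ℕ) : Finset (XVert f n) := {v | 2 ^ 2 ^ (2 * n) ∣ v.1.2}

lemma card_rungs : f n * (f n + 1) ≤ #(rungs f n) := by
  have hA : 0 < 2 ^ 2 ^ (2 * n) := by positivity
  calc f n * (f n + 1) = #(univ : Finset (Fin (f n) × Fin (f n + 1))) := by simp
    _ ≤ #(rungs f n) := by
      refine card_le_card_of_injOn (fun p => row p.2 (Nat.le_of_lt_succ p.2.2) p.1)
        (fun p _ => by simp [rungs]) ?_
      rintro ⟨i, l⟩ - ⟨i', l'⟩ - h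
      have h₁ := congrArg (fun v : XVert f n => v.1.1) h
      have h₂ := congrArg (fun v : XVert f n => v.1.2) h
      simp only [row_apply] at h₁ h₂
      exact Prod.ext (Fin.ext h₁) (Fin.ext (Nat.eq_of_mul_eq_mul_left hA h₂))

variable (S : Finset (XVert f n))

noncomputable def mixedColumns : Finset ℕ :=
  {i ∈ range (f n) | ¬ ∀ v w : XVert f n, v.1.1 = i → w.1.1 = i → (v ∈ S ↔ w ∈ S)}

noncomputable def mixedRows : Finset ℕ :=
  {l ∈ range (f n + 1) | ¬ ∀ v w : XVert f n,
    v.1.2 = 2 ^ 2 ^ (2 * n) * l → w.1.2 = 2 ^ 2 ^ (2 * n) * l → (v ∈ S ↔ w ∈ S)}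

/-- A mixed column contains a vertical edge of the cut, a mixed row a horizontal one. -/
lemma card_mixedColumns_add_card_mixedRows_le :
    #(mixedColumns S) + #(mixedRows S) ≤ #((Xgraph f n).interedges S Sᶜ) := by
  set I := (Xgraph f n).interedges S Sᶜ
  have hcol : mixedColumns S ⊆ {p ∈ I | p.1.1.1 = p.2.1.1}.image fun p => p.1.1.1 := by
    intro i hi
    simp only [mixedColumns, mem_filter, mem_range, not_forall] at hi
    obtain ⟨hi, v, w, hv, hw, hvw⟩ := hi
    subst hv
    have hv' : column v.1.1 hi ⟨v.1.2, Nat.lt_succ_of_le v.2.2⟩ = v := rfl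
    have hw' : column v.1.1 hi ⟨w.1.2, Nat.lt_succ_of_le w.2.2⟩ = w := XVert.ext' hw.symm rfl
    obtain ⟨x, y, hxy⟩ :=
      exists_mem_interedges_of_pathGraph (column v.1.1 hi) S (x := ⟨v.1.2, _⟩) (y := ⟨w.1.2, _⟩)
        (by rwa [hv', hw'])
    exact mem_image.mpr ⟨_, mem_filter.mpr ⟨hxy, rfl⟩, rfl⟩
  have hrow : mixedRows S ⊆
      {p ∈ I | ¬ p.1.1.1 = p.2.1.1}.image fun p => p.1.1.2 / 2 ^ 2 ^ (2 * n) := by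
    intro l hl
    simp only [mixedRows, mem_filter, mem_range, not_forall] at hl
    obtain ⟨hl, v, w, hv, hw, hvw⟩ := hl
    have hv' : row l (Nat.le_of_lt_succ hl) ⟨v.1.1, v.2.1⟩ = v := XVert.ext' rfl hv.symm
    have hw' : row l (Nat.le_of_lt_succ hl) ⟨w.1.1, w.2.1⟩ = w := XVert.ext' rfl hw.symm
    obtain ⟨x, y, hxy⟩ :=
      exists_mem_interedges_of_pathGraph (row l (Nat.le_of_lt_succ hl)) S (x := ⟨v.1.1, _⟩)
        (y := ⟨w.1.1, _⟩) (by rwa [hv', hw'])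
    refine mem_image.mpr ⟨_, mem_filter.mpr ⟨hxy, fun h => ?_⟩, ?_⟩
    · exact ((Xgraph f n).mk_mem_interedges_iff.mp hxy).2.2.ne (XVert.ext' h rfl)
    · simp
  calc #(mixedColumns S) + #(mixedRows S)
      ≤ #{p ∈ I | p.1.1.1 = p.2.1.1} + #{p ∈ I | ¬ p.1.1.1 = p.2.1.1} :=
        add_le_add ((card_le_card hcol).trans card_image_le)
          ((card_le_card hrow).trans card_image_le)
    _ = #I := card_filter_add_card_filter_not _

lemma mem_iff_of_not_mem_mixedColumns {i : ℕ} (hi : i < f n) (hS : i ∉ mixedColumns S)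
    {v w : XVert f n} (hv : v.1.1 = i) (hw : w.1.1 = i) : v ∈ S ↔ w ∈ S := by
  simp only [mixedColumns, mem_filter, mem_range, hi, true_and, not_not] at hS
  exact hS v w hv hw

lemma mem_iff_of_not_mem_mixedRows {l : ℕ} (hl : l ≤ f n) (hS : l ∉ mixedRows S)
    {v w : XVert f n} (hv : v.1.2 = 2 ^ 2 ^ (2 * n) * l) (hw : w.1.2 = 2 ^ 2 ^ (2 * n) * l) :
    v ∈ S ↔ w ∈ S := by
  simp only [mixedRows, mem_filter, mem_range, Nat.lt_succ_of_le hl, true_and, not_not] at hS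
  exact hS v w hv hw

/-- Every unmixed column meets the unmixed row `l₀`, and every unmixed row meets the unmixed
column `i₀`, so all of them lie on the side of the crossing point `p₀`. -/
lemma card_rungs_side_ne_le {i₀ l₀ : ℕ} (hi₀ : i₀ < f n) (hi₀S : i₀ ∉ mixedColumns S)
    (hl₀ : l₀ ≤ f n) (hl₀S : l₀ ∉ mixedRows S) {p₀ : XVert f n} (hp₀ : p₀.1.1 = i₀)
    (hp₀' : p₀.1.2 = 2 ^ 2 ^ (2 * n) * l₀) :
    #{v ∈ rungs f n | ¬(v ∈ S ↔ p₀ ∈ S)} ≤ #(mixedColumns S) * #(mixedRows S) := by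
  set A := 2 ^ 2 ^ (2 * n)
  have hA : 0 < A := by positivity
  rw [← card_product]
  refine card_le_card_of_injOn (fun v => (v.1.1, v.1.2 / A)) (fun v hv => ?_) ?_
  · obtain ⟨hvR, hvS⟩ : v ∈ rungs f n ∧ ¬(v ∈ S ↔ p₀ ∈ S) := by simpa using hv
    obtain ⟨l, hl⟩ : A ∣ v.1.2 := by simpa [rungs] using hvR
    have hlf : l ≤ f n := Nat.le_of_mul_le_mul_left (hl ▸ v.2.2) hA
    refine mem_product.mpr ⟨by_contra fun hc => hvS ?_, ?_⟩
    · let q : XVert f n := ⟨(v.1.1, A * l₀), v.2.1, Nat.mul_le_mul_left _ hl₀⟩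
      exact (mem_iff_of_not_mem_mixedColumns S v.2.1 hc rfl (w := q) rfl).trans
        (mem_iff_of_not_mem_mixedRows S hl₀ hl₀S rfl hp₀')
    · change v.1.2 / A ∈ mixedRows S
      rw [hl, Nat.mul_div_cancel_left _ hA]
      refine by_contra fun hr => hvS ?_
      let q : XVert f n := ⟨(i₀, v.1.2), hi₀, v.2.2⟩
      exact (mem_iff_of_not_mem_mixedRows S hlf hr hl (w := q) hl).trans
        (mem_iff_of_not_mem_mixedColumns S hi₀ hi₀S rfl hp₀)
  · intro v hv w hw hvw
    obtain ⟨h₁, h₂⟩ := Prod.mk.inj hvw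
    have hdv : A ∣ v.1.2 := (mem_filter.mp (mem_filter.mp hv).1).2
    have hdw : A ∣ w.1.2 := (mem_filter.mp (mem_filter.mp hw).1).2
    refine XVert.ext' h₁ ?_
    rw [← Nat.div_mul_cancel hdv, ← Nat.div_mul_cancel hdw, h₂]

/-- A cut of at most `k < f n` edges leaves a column `i₀` and a row `l₀` unmixed, and the rungs
on the side not containing their crossing point lie in the at most `k` mixed columns and rows. -/
lemma card_rungs_inter_le {k : ℕ} (hk : k < f n)
    (hS : #((Xgraph f n).interedges S Sᶜ) ≤ k) :
    #(rungs f n ∩ S) ≤ k * k / 4 ∨ #(rungs f n \ S) ≤ k * k / 4 := by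
  have hmix := card_mixedColumns_add_card_mixedRows_le S
  obtain ⟨i₀, hi₀, hi₀S⟩ :=
    exists_mem_notMem_of_card_lt_card (s := mixedColumns S) (t := range (f n)) (by simp; omega)
  obtain ⟨l₀, hl₀, hl₀S⟩ :=
    exists_mem_notMem_of_card_lt_card (s := mixedRows S) (t := range (f n + 1)) (by simp; omega)
  rw [mem_range] at hi₀ hl₀
  replace hl₀ := Nat.le_of_lt_succ hl₀
  set p₀ : XVert f n := ⟨(i₀, 2 ^ 2 ^ (2 * n) * l₀), hi₀, Nat.mul_le_mul_left _ hl₀⟩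
  have hbad := card_rungs_side_ne_le S hi₀ hi₀S hl₀ hl₀S (p₀ := p₀) rfl rfl
  have hprod : #(mixedColumns S) * #(mixedRows S) ≤ k * k / 4 := by
    rw [Nat.le_div_iff_mul_le (by norm_num)]
    nlinarith [sq_nonneg ((#(mixedColumns S) : ℤ) - #(mixedRows S))]
  by_cases hp₀ : p₀ ∈ S
  · refine .inr ((card_le_card fun v hv => ?_).trans (hbad.trans hprod))
    obtain ⟨hvR, hvS⟩ := mem_sdiff.mp hv
    exact mem_filter.mpr ⟨hvR, fun h => hvS (h.mpr hp₀)⟩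
  · refine .inl ((card_le_card fun v hv => ?_).trans (hbad.trans hprod))
    obtain ⟨hvR, hvS⟩ := mem_inter.mp hv
    exact mem_filter.mpr ⟨hvR, fun h => hp₀ (h.mp hvS)⟩

end Xgraph

namespace Ytotal

variable {f : ℕ → ℕ}

lemma ext' {u v : YTVert f} (h₁ : u.1.1 = v.1.1) (h₂ : u.1.2.1 = v.1.2.1)
    (h₃ : u.1.2.2 = v.1.2.2) : u = v :=
  Subtype.ext (Prod.ext h₁ (Prod.ext h₂ h₃))

lemma adj_cases {u v : YTVert f} (h : (Ytotal f).Adj u v) :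
    u.1.1 = v.1.1 ∧
      ((u.1.2.1 = v.1.2.1 ∧ (v.1.2.2 = u.1.2.2 + 1 ∨ u.1.2.2 = v.1.2.2 + 1)) ∨
        (u.1.2.2 = v.1.2.2 ∧ 2 ^ 2 ^ (2 * u.1.1 + 1) ∣ u.1.2.2 ∧
          (v.1.2.1 = u.1.2.1 + 1 ∨ u.1.2.1 = v.1.2.1 + 1))) := by
  obtain ⟨-, hfst, hstep⟩ := h
  refine ⟨hfst, ?_⟩
  rcases hstep with (⟨h₁, h₂⟩ | ⟨h₁, h₂, h₃⟩) | (⟨h₁, h₂⟩ | ⟨h₁, h₂, h₃⟩)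
  · exact .inl ⟨h₁, .inl h₂⟩
  · exact .inr ⟨h₁, h₂, .inl h₃⟩
  · exact .inl ⟨h₁.symm, .inr h₂⟩
  · exact .inr ⟨h₁.symm, h₁ ▸ h₂, .inr h₃⟩

lemma fst_eq_of_reachable {u v : YTVert f} (h : (Ytotal f).Reachable u v) : u.1.1 = v.1.1 := by
  obtain ⟨p⟩ := h
  induction p with
  | nil => rfl
  | cons h _ ih => exact (adj_cases h).1.trans ih

lemma encard_neighborSet_le (w : YTVert f) : ((Ytotal f).neighborSet w).encard ≤ 4 := by
  let offset : YTVert f → ℤ × ℤ := fun u =>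
    ((u.1.2.1 : ℤ) - w.1.2.1, (u.1.2.2 : ℤ) - w.1.2.2)
  have hmaps : Set.MapsTo offset ((Ytotal f).neighborSet w)
      ({(0, 1), (0, -1), (1, 0), (-1, 0)} : Finset (ℤ × ℤ)) := by
    intro u hu
    rcases adj_cases hu with ⟨-, ⟨h₁, h₂ | h₂⟩ | ⟨h₁, -, h₂ | h₂⟩⟩ <;> simp [offset] <;> omega
  have hinj : Set.InjOn offset ((Ytotal f).neighborSet w) := by
    intro u hu v hv huv
    simp only [offset, Prod.mk.injEq] at huv
    exact ext' ((adj_cases hu).1.symm.trans (adj_cases hv).1) (by omega) (by omega)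
  calc ((Ytotal f).neighborSet w).encard
      ≤ (({(0, 1), (0, -1), (1, 0), (-1, 0)} : Finset (ℤ × ℤ)) : Set (ℤ × ℤ)).encard :=
        Set.encard_le_encard_of_injOn hmaps hinj
    _ ≤ 4 := by
        rw [Set.encard_coe_eq_coe_finsetCard]
        exact_mod_cast Finset.card_le_four

lemma ncard_le_of_forall_fst_eq (s : Set (YTVert f)) {m : ℕ} (hs : ∀ z ∈ s, z.1.1 = m) :
    s.ncard ≤ f m * (2 ^ 2 ^ (2 * m + 1) * f m + 1) := by
  have hmaps : Set.MapsTo (fun z : YTVert f => (z.1.2.1, z.1.2.2)) s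
      (Finset.range (f m) ×ˢ Finset.range (2 ^ 2 ^ (2 * m + 1) * f m + 1) : Finset (ℕ × ℕ)) := by
    intro z hz
    have := z.2
    simp only [Finset.coe_product, Finset.coe_range, Set.mem_prod, Set.mem_Iio, hs z hz] at this ⊢
    omega
  have hinj : Set.InjOn (fun z : YTVert f => (z.1.2.1, z.1.2.2)) s := fun u hu v hv huv =>
    ext' ((hs u hu).trans (hs v hv).symm) (Prod.mk.inj huv).1 (Prod.mk.inj huv).2
  calc s.ncard ≤ ((Finset.range (f m) ×ˢ Finset.range (2 ^ 2 ^ (2 * m + 1) * f m + 1) :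
          Finset (ℕ × ℕ)) : Set (ℕ × ℕ)).ncard :=
        Set.ncard_le_ncard_of_injOn _ hmaps hinj (Finset.finite_toSet _)
    _ = f m * (2 ^ 2 ^ (2 * m + 1) * f m + 1) := by
        rw [Set.ncard_coe_finset, Finset.card_product, Finset.card_range, Finset.card_range]

lemma hgt_le_of_adj {u v : YTVert f} (h : (Ytotal f).Adj u v) : v.1.2.2 ≤ u.1.2.2 + 1 := by
  rcases adj_cases h with ⟨-, ⟨-, h | h⟩ | ⟨h, -⟩⟩ <;> omega

lemma dvd_of_adj_of_hgt_eq {x u : YTVert f} (h : (Ytotal f).Adj x u) (he : u.1.2.2 = x.1.2.2) :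
    2 ^ 2 ^ (2 * x.1.1 + 1) ∣ x.1.2.2 := by
  rcases adj_cases h with ⟨-, ⟨-, h | h⟩ | ⟨-, h, -⟩⟩
  · omega
  · omega
  · exact h

/-- At a lowest or highest vertex, the two cycle edges cannot both be vertical. -/
lemma exists_hgt_eq_of_isCycle {z x : YTVert f} {c : (Ytotal f).Walk z z} (hc : c.IsCycle)
    (hx : x ∈ c.support)
    (hext : (∀ y ∈ c.support, y.1.2.2 ≤ x.1.2.2) ∨ ∀ y ∈ c.support, x.1.2.2 ≤ y.1.2.2) :
    ∃ u, s(x, u) ∈ c.edges ∧ u.1.2.2 = x.1.2.2 := by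
  refine hc.exists_mem_edges_of_subsingleton hx _ fun u₁ ⟨h₁, hs₁, hn₁⟩ u₂ ⟨h₂, hs₂, hn₂⟩ => ?_
  have hext' : (u₁.1.2.2 ≤ x.1.2.2 ∧ u₂.1.2.2 ≤ x.1.2.2) ∨
      (x.1.2.2 ≤ u₁.1.2.2 ∧ x.1.2.2 ≤ u₂.1.2.2) :=
    hext.imp (fun h => ⟨h u₁ hs₁, h u₂ hs₂⟩) (fun h => ⟨h u₁ hs₁, h u₂ hs₂⟩)
  rcases adj_cases h₁ with ⟨e₁, ⟨c₁, d₁⟩ | ⟨d₁, -, c₁⟩⟩ <;>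
    rcases adj_cases h₂ with ⟨e₂, ⟨c₂, d₂⟩ | ⟨d₂, -, c₂⟩⟩ <;>
    exact ext' (e₁.symm.trans e₂) (by omega) (by omega)

/-- A horizontal line is a path: at its rightmost vertex a cycle would need two left neighbours. -/
lemma not_forall_hgt_eq_of_isCycle {z : YTVert f} {c : (Ytotal f).Walk z z} (hc : c.IsCycle)
    (h : ℕ) : ¬ ∀ y ∈ c.support, y.1.2.2 = h := by
  classical
  intro hall
  obtain ⟨x, hx, hmax⟩ := c.support.toFinset.exists_max_image (·.1.2.1)
    ⟨z, List.mem_toFinset.mpr c.start_mem_support⟩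
  simp only [List.mem_toFinset] at hx hmax
  obtain ⟨u, -, hu⟩ := hc.exists_mem_edges_of_subsingleton hx (fun _ => False)
    fun u₁ ⟨h₁, hs₁, _⟩ u₂ ⟨h₂, hs₂, _⟩ => by
      have := hall u₁ hs₁; have := hall u₂ hs₂; have := hall x hx
      have := hmax u₁ hs₁; have := hmax u₂ hs₂
      rcases adj_cases h₁ with ⟨e₁, ⟨c₁, d₁⟩ | ⟨d₁, -, c₁⟩⟩ <;>
        rcases adj_cases h₂ with ⟨e₂, ⟨c₂, d₂⟩ | ⟨d₂, -, c₂⟩⟩ <;>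
        exact ext' (e₁.symm.trans e₂) (by omega) (by omega)
  exact hu

/-- Between its lowest and its highest vertex a cycle must climb and descend, and both extreme
heights carry horizontal edges, so they are multiples of the period `T`; this gives length at
least `2T`, plus one for a horizontal step. -/
theorem length_ge_of_isCycle {z : YTVert f} {c : (Ytotal f).Walk z z} (hc : c.IsCycle) :
    2 * 2 ^ 2 ^ (2 * z.1.1 + 1) + 1 ≤ c.length := by
  classical
  set T := 2 ^ 2 ^ (2 * z.1.1 + 1)
  have hsupp : c.support.toFinset.Nonempty := ⟨z, List.mem_toFinset.mpr c.start_mem_support⟩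
  obtain ⟨vp, hvp, hmax⟩ := c.support.toFinset.exists_max_image (·.1.2.2) hsupp
  obtain ⟨vm, hvm, hmin⟩ := c.support.toFinset.exists_min_image (·.1.2.2) hsupp
  simp only [List.mem_toFinset] at hvp hvm hmax hmin
  obtain ⟨up, hup, hup_flat⟩ := exists_hgt_eq_of_isCycle hc hvp (.inl hmax)
  obtain ⟨um, hum, hum_flat⟩ := exists_hgt_eq_of_isCycle hc hvm (.inr hmin)
  have hT : ∀ x ∈ c.support, ∀ u, s(x, u) ∈ c.edges → u.1.2.2 = x.1.2.2 → T ∣ x.1.2.2 := by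
    intro x hx u hu hxu
    have := dvd_of_adj_of_hgt_eq (c.adj_of_mem_edges hu) hxu
    rwa [← fst_eq_of_reachable ⟨c.takeUntil x hx⟩] at this
  have hlt : vm.1.2.2 < vp.1.2.2 := by
    by_contra! hle
    exact not_forall_hgt_eq_of_isCycle hc vp.1.2.2 fun y hy =>
      le_antisymm (hmax y hy) (hle.trans (hmin y hy))
  have hgap : vm.1.2.2 + T ≤ vp.1.2.2 := by
    have := Nat.le_of_dvd (by omega) (Nat.dvd_sub (hT vp hvp up hup hup_flat)
      (hT vm hvm um hum hum_flat))
    omega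
  have hcount : 0 < c.darts.countP (fun d => d.fst.1.2.2 = d.snd.1.2.2) := by
    obtain ⟨d, hd, hde⟩ := List.mem_map.mp (show s(vp, up) ∈ c.darts.map Dart.edge from hup)
    refine List.countP_pos_iff.mpr ⟨d, hd, ?_⟩
    rcases Sym2.eq_iff.mp hde with ⟨h₁, h₂⟩ | ⟨h₁, h₂⟩ <;> simp [h₁, h₂, hup_flat]
  have := Walk.two_mul_add_countP_le_length (·.1.2.2) (fun _ _ => hgt_le_of_adj) c hvm hvp
  omega

end Ytotal

lemma pow_three_le_two_pow_two_pow (K : ℕ) : K ^ 3 ≤ 2 ^ 2 ^ (2 * K + 1) := by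
  have h₁ : 3 * K ≤ 2 ^ (2 * K + 1) := by
    have := Nat.lt_two_pow_self (n := 2 * K)
    rw [pow_succ]
    omega
  calc K ^ 3 ≤ (2 ^ K) ^ 3 := Nat.pow_le_pow_left Nat.lt_two_pow_self.le 3
    _ = 2 ^ (3 * K) := by rw [← pow_mul, mul_comm]
    _ ≤ 2 ^ 2 ^ (2 * K + 1) := Nat.pow_le_pow_right two_pos h₁

lemma mul_card_lt_card {m n a k N : ℕ} (hm : m < n) (ha : a ≤ n - 1) (hk : k ≤ n - 1)
    (hN : 2 ≤ N) :
    k * (a * (2 ^ 2 ^ (2 * m + 1) * a + 1)) < N * (2 ^ 2 ^ (2 * n) * N + 1) := by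
  set K := n - 1
  set Q := 2 ^ 2 ^ (2 * K + 1)
  have hQm : 2 ^ 2 ^ (2 * m + 1) ≤ Q :=
    Nat.pow_le_pow_right two_pos (Nat.pow_le_pow_right two_pos (by omega))
  have hQn : 2 ^ 2 ^ (2 * n) = Q * Q := by
    rw [← pow_add, ← two_mul, ← pow_succ']
    congr 2
    omega
  have hK3 : K ^ 3 ≤ Q := pow_three_le_two_pow_two_pow K
  have hQ : 1 ≤ Q := Nat.one_le_two_pow
  have hK2 : K * K ≤ K ^ 3 := by
    rcases Nat.eq_zero_or_pos K with h | h
    · simp [h]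
    · nlinarith
  calc k * (a * (2 ^ 2 ^ (2 * m + 1) * a + 1)) ≤ K * (K * (Q * K + 1)) := by gcongr
    _ = Q * K ^ 3 + K * K := by ring
    _ < 2 * (Q * Q * 2 + 1) := by nlinarith [Nat.mul_le_mul_left Q hK3]
    _ ≤ N * (2 ^ 2 ^ (2 * n) * N + 1) := by rw [hQn]; gcongr

lemma Wiring.volume_ge_of_isCycle {f : ℕ → ℕ} {V : Type*} [Finite V] {G : SimpleGraph V}
    (g : Wiring G (Ytotal f)) {z : YTVert f} {c : g.imageSubgraph.spanningCoe.Walk z z}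
    (hc : c.IsCycle) : 2 * 2 ^ 2 ^ (2 * z.1.1 + 1) + 1 ≤ g.volume := by
  have hY := Ytotal.length_ge_of_isCycle (hc.mapLe (Subgraph.spanningCoe_le _))
  rw [Walk.length_mapLe] at hY
  exact hY.trans (g.imageSubgraph.length_le_ncard_verts_of_isCycle g.imageVerts_finite hc)

namespace Xgraph

variable {f : ℕ → ℕ} {n : ℕ}

open scoped Classical in
lemma not_isAcyclic_imageSubgraph (hn : 2 ≤ f n) (g : Wiring (Xgraph f n) (Ytotal f))
    (hg : g.IsCoarse (f n - 1)) : ¬ g.imageSubgraph.spanningCoe.IsAcyclic := by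
  intro hΓ
  have hR := g.card_le_of_isAcyclic hg preconnected hΓ Ytotal.encard_neighborSet_le
    (rungs f n) _ fun S hS => card_rungs_inter_le S (by omega) hS
  have hR' := card_rungs (f := f) (n := n)
  have := Nat.mul_div_le ((f n - 1) * (f n - 1)) 4
  obtain ⟨k, hk⟩ : ∃ k, f n = k + 1 := ⟨f n - 1, by omega⟩
  simp only [hk, Nat.add_sub_cancel] at hR hR' this
  nlinarith

/-- The image can only lie in a component `Y_m` with enough vertices to receive `X_n`. -/
lemma le_of_forall_mem_imageVerts (hf1 : f 1 = 1) (hf : ∀ n, 2 ≤ n → 2 ≤ f n ∧ f n ≤ n)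
    (hn : 2 ≤ f n) (g : Wiring (Xgraph f n) (Ytotal f)) (hg : g.IsCoarse (f n - 1)) {m : ℕ}
    (hm₁ : 1 ≤ m) (hm : ∀ z ∈ g.imageVerts, z.1.1 = m) : n ≤ m := by
  by_contra! hmn
  have hfm : f m ≤ n - 1 := by
    rcases (show m = 1 ∨ 2 ≤ m by omega) with h | h
    · rw [h, hf1]; omega
    · have := (hf m h).2; omega
  have hfn := (hf n (by omega)).2
  have hcard := (g.card_le_mul_volume hg).trans
    (Nat.mul_le_mul_left _ (Ytotal.ncard_le_of_forall_fst_eq _ hm))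
  rw [Nat.card_eq_fintype_card, XVert.card_eq] at hcard
  exact (mul_card_lt_card hmn hfm (by omega) hn).not_ge hcard

end Xgraph

theorem statement1_general
    (f : ℕ → ℕ)
    (hf1 : f 1 = 1)
    (hf : ∀ n, 2 ≤ n → 2 ≤ f n ∧ f n ≤ n)
    (n : ℕ) (hn : 2 ≤ f n)
    (g : Wiring (Xgraph f n) (Ytotal f)) (hg : g.IsCoarse (f n - 1)) :
    2 * 2 ^ 2 ^ (2 * n + 1) + 1 ≤ g.volume := by
  set x₀ : XVert f n := ⟨(0, 0), by omega, Nat.zero_le _⟩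
  have hm : ∀ z ∈ g.imageVerts, z.1.1 = (g.toFun x₀).1.1 := fun z hz =>
    (Ytotal.fst_eq_of_reachable (g.reachable_of_mem_imageVerts Xgraph.preconnected x₀ hz)).symm
  have hnm := Xgraph.le_of_forall_mem_imageVerts hf1 hf hn g hg (g.toFun x₀).2.1 hm
  obtain ⟨z, c, hc⟩ : ∃ z, ∃ c : g.imageSubgraph.spanningCoe.Walk z z, c.IsCycle := by
    simpa [IsAcyclic] using Xgraph.not_isAcyclic_imageSubgraph hn g hg
  obtain ⟨u, -, -, hu, -⟩ := hc.exists_ne_mem_edges c.start_mem_support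
  have hz := hm z (g.imageSubgraph.edge_vert (c.adj_of_mem_edges hu))
  calc 2 * 2 ^ 2 ^ (2 * n + 1) + 1 ≤ 2 * 2 ^ 2 ^ (2 * z.1.1 + 1) + 1 := by gcongr <;> omega
    _ ≤ g.volume := g.volume_ge_of_isCycle hc

/-- For `f n ≥ 2`, every coarse `(f n - 1)`-wiring of `X_n` into `Y`
has volume at least `2 · 2^(2^(2n+1)) + 1`. -/
theorem statement1
    (f : ℕ → ℕ)
    (hsurj : ∀ k, 1 ≤ k → ∃ n, 1 ≤ n ∧ f n = k)
    (hf1 : f 1 = 1)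
    (hf : ∀ n, 2 ≤ n → 2 ≤ f n ∧ f n ≤ n)
    (hinf : ∀ k, 2 ≤ k → {n | f n = k}.Infinite)
    (n : ℕ) (hn : 2 ≤ f n)
    (g : Wiring (Xgraph f n) (Ytotal f)) (hg : g.IsCoarse (f n - 1)) :
    2 * 2 ^ 2 ^ (2 * n + 1) + 1 ≤ g.volume :=
  statement1_general f hf1 hf n hn g hg
end

section
/- For every n with f(n) ≥ 2 (equivalently n ≠ 1), every subgraph of X with at most N = (2^{2^{2n}}·f(n)+1)·f(n) vertices admits a coarse f(n)-wiring into Y with volume at most 2N; consequently wir^{f(n)}_{X→Y}(N) ≤ 2N. -/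
open SimpleGraph

/-!
Each part of `Γ` is placed in a single piece of `Y`. Let `N = (2^2^(2n) f(n) + 1) f(n)`.

* If `f m ≤ f n`, the vertices of `Γ` in `X_m` go to a fresh piece `Y_P` with `f P = f n` and
  `P ≥ m`, all columns collapsed onto column `0`: horizontal edges are contracted and the map is
  at most `f n`-to-one.
* If `f m > f n` and `m < n`, `X_m` goes to `Y_m` with heights multiplied by the spacing
  `s = 2^2^(2m)` of `X_m`. As `s²` is the spacing of `Y_m`, vertical edges become vertical paths
  of length `s` and horizontal edges stay horizontal.
* Otherwise `m > n` and `m > f n`, so `s > N ≥ |Γ|`. Heights in a component of `Γ` differ by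
  less than `|Γ|`, so its horizontal edges all lie at one height; the component is translated
  into its own fresh piece `Y_P` with `f P = f m` so that this height lands on the horizontal
  level `2^2^(2P+1)` of `Y_P`.

A vertex or edge of `Y` is then used by at most one vertex or oriented edge of `Γ` per collapsed
column, so by at most `f n` of them. Besides the images of vertices, only the pieces `Y_m` with
`m < n` are used, and these have at most `N` vertices altogether.
-/

namespace Wiring

variable {V W : Type*} {G : SimpleGraph V} {H : SimpleGraph W}

def ofPotential (F : V → W) (φ : V → ℕ) (hφ : ∀ ⦃u v⦄, G.Adj u v → φ u ≠ φ v)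
    (w : ∀ u v, G.Adj u v → φ u < φ v → H.Walk (F u) (F v)) : Wiring G H where
  toFun := F
  walk u v h :=
    if hlt : φ u < φ v then w u v h hlt
    else (w v u h.symm (lt_of_le_of_ne (not_lt.1 hlt) (hφ h.symm))).reverse
  walk_symm u v h := by
    by_cases hlt : φ u < φ v
    · simp [hlt, not_lt_of_gt hlt]
    · have hvu : φ v < φ u := lt_of_le_of_ne (not_lt.1 hlt) (hφ h.symm)
      simp [hlt, hvu]

variable {F : V → W} {φ : V → ℕ} {hφ : ∀ ⦃u v⦄, G.Adj u v → φ u ≠ φ v}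
  {w : ∀ u v, G.Adj u v → φ u < φ v → H.Walk (F u) (F v)}

lemma isCoarse_ofPotential [Finite V] {k : ℕ} (hfib : ∀ x, {v | F v = x}.ncard ≤ k)
    (hcong : ∀ e, {p : V × V | ∃ h hlt, e ∈ (w p.1 p.2 h hlt).edges}.ncard ≤ k) :
    (ofPotential F φ hφ w).IsCoarse k := by
  refine ⟨hfib, fun e _ => ?_⟩
  set O := {p : V × V | ∃ h hlt, e ∈ (w p.1 p.2 h hlt).edges}
  have hsub : {p : V × V | ∃ h, e ∈ ((ofPotential F φ hφ w).walk p.1 p.2 h).edges} ⊆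
      O ∪ Prod.swap '' O := by
    rintro ⟨u, v⟩ ⟨h, he⟩
    simp only [ofPotential] at he
    split_ifs at he with hlt
    · exact Or.inl ⟨h, hlt, he⟩
    · rw [SimpleGraph.Walk.edges_reverse, List.mem_reverse] at he
      exact Or.inr ⟨(v, u), ⟨h.symm, _, he⟩, rfl⟩
  calc _ ≤ (O ∪ Prod.swap '' O).ncard := Set.ncard_le_ncard hsub
    _ ≤ O.ncard + (Prod.swap '' O).ncard := Set.ncard_union_le _ _
    _ ≤ O.ncard + O.ncard := Nat.add_le_add_left (Set.ncard_image_le (Set.toFinite O)) _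
    _ ≤ 2 * k := by rw [two_mul]; exact Nat.add_le_add (hcong e) (hcong e)

lemma imageVerts_ofPotential_subset :
    (ofPotential F φ hφ w).imageVerts ⊆
      Set.range F ∪ {x | ∃ u v h hlt, x ∈ (w u v h hlt).support} := by
  rintro x (hx | ⟨u, v, h, hx⟩)
  · exact Or.inl hx
  · right
    simp only [ofPotential] at hx
    split_ifs at hx with hlt
    · exact ⟨u, v, h, hlt, hx⟩
    · rw [SimpleGraph.Walk.support_reverse, List.mem_reverse] at hx
      exact ⟨v, u, h.symm, _, hx⟩

end Wiring

lemma wirProfile_le_of_forall {V W : Type*} {X : SimpleGraph V} {H : SimpleGraph W}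
    {k n B : ℕ} (h : ∀ Γ : X.Subgraph, Γ.verts.Finite → Γ.verts.ncard ≤ n →
      ∃ Wr : Wiring Γ.coe H, Wr.IsCoarse k ∧ Wr.volume ≤ B) :
    wirProfile X H k n ≤ B := by
  refine sSup_le ?_
  rintro _ ⟨Γ, hfin, hcard, rfl⟩
  obtain ⟨Wr, hco, hvol⟩ := h Γ hfin hcard
  calc wir k Γ.coe H ≤ Wr.volume := sInf_le ⟨Wr, hco, rfl⟩
    _ ≤ B := by exact_mod_cast hvol

lemma Sym2.eq_and_eq_of_lt {α : Type*} (φ : α → ℕ) {p q p' q' : α} (h : s(p, q) = s(p', q'))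
    (hpq : φ p < φ q) (hpq' : φ p' < φ q') : p = p' ∧ q = q' := by
  rcases Sym2.eq_iff.1 h with h | ⟨rfl, rfl⟩
  · exact h
  · omega

lemma Set.ncard_le_of_injOn_lt {α : Type*} {s : Set α} {g : α → ℕ} {k : ℕ}
    (hg : ∀ a ∈ s, g a < k) (hinj : s.InjOn g) : s.ncard ≤ k := by
  simpa using Set.ncard_le_ncard_of_injOn (t := Set.Iio k) g hg hinj (Set.finite_Iio k)

lemma Nat.eq_of_dvd_of_lt_add {a x y : ℕ} (hx : a ∣ x) (hy : a ∣ y) (hxy : x < y + a)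
    (hyx : y < x + a) : x = y := by
  obtain ⟨p, rfl⟩ := hx
  obtain ⟨q, rfl⟩ := hy
  have h1 : p < q + 1 := Nat.lt_of_mul_lt_mul_left (by rw [mul_add_one]; exact hxy)
  have h2 : q < p + 1 := Nat.lt_of_mul_lt_mul_left (by rw [mul_add_one]; exact hyx)
  rw [show p = q by omega]

lemma two_pow_two_pow_succ (k : ℕ) : 2 ^ 2 ^ (k + 1) = 2 ^ 2 ^ k * 2 ^ 2 ^ k := by
  rw [pow_succ, pow_mul, sq]

lemma two_pow_two_pow_mono {k l : ℕ} (h : k ≤ l) : 2 ^ 2 ^ k ≤ 2 ^ 2 ^ l :=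
  Nat.pow_le_pow_right two_pos (Nat.pow_le_pow_right two_pos h)

lemma cube_lt_two_pow_two_pow (k : ℕ) : k * k * k < 2 ^ 2 ^ (2 * k + 1) := by
  have hk : k < 2 ^ k := Nat.lt_two_pow_self
  have h2k : 2 * k < 2 ^ (2 * k) := Nat.lt_two_pow_self
  calc k * k * k < 2 ^ k * 2 ^ k * 2 ^ k := Nat.mul_lt_mul'' (Nat.mul_lt_mul'' hk hk) hk
    _ = 2 ^ (3 * k) := by ring
    _ ≤ 2 ^ 2 ^ (2 * k + 1) := Nat.pow_le_pow_right two_pos (by rw [pow_succ]; omega)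

lemma size_lt_two_pow_two_pow {n b m : ℕ} (hn : n < m) (hb : b < m) :
    (2 ^ 2 ^ (2 * n) * b + 1) * b < 2 ^ 2 ^ (2 * m) := by
  obtain ⟨l, rfl⟩ : ∃ l, m = l + 1 := ⟨m - 1, by omega⟩
  have hT : 2 ^ 2 ^ (2 * n) * 2 ≤ 2 ^ 2 ^ (2 * l + 1) :=
    calc 2 ^ 2 ^ (2 * n) * 2 ≤ 2 ^ 2 ^ (2 * n) * 2 ^ 2 ^ (2 * n) :=
          Nat.mul_le_mul_left _ (Nat.le_self_pow (by positivity) 2)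
      _ = 2 ^ 2 ^ (2 * n + 1) := (two_pow_two_pow_succ _).symm
      _ ≤ 2 ^ 2 ^ (2 * l + 1) := two_pow_two_pow_mono (by omega)
  have hbb : b * b < 2 ^ 2 ^ (2 * l + 1) :=
    calc b * b ≤ l * l * l := by
          rcases Nat.eq_zero_or_pos l with rfl | hl
          · simp [show b = 0 by omega]
          · nlinarith [Nat.mul_le_mul (show b ≤ l by omega) (show b ≤ l by omega)]
      _ < _ := cube_lt_two_pow_two_pow l
  rw [show 2 * (l + 1) = 2 * l + 1 + 1 by ring, two_pow_two_pow_succ]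
  rcases Nat.eq_zero_or_pos b with rfl | hb0
  · simp
  · nlinarith

namespace Ytotal

open SimpleGraph

variable {f : ℕ → ℕ}

lemma adj_of_vertical {a b : YTVert f} (hP : a.val.1 = b.val.1) (hi : a.val.2.1 = b.val.2.1)
    (hy : b.val.2.2 = a.val.2.2 + 1) : (Ytotal f).Adj a b :=
  ⟨fun h => by rw [h] at hy; omega, hP, Or.inl (Or.inl ⟨hi, hy⟩)⟩

lemma adj_of_horizontal {a b : YTVert f} (hP : a.val.1 = b.val.1) (hy : a.val.2.2 = b.val.2.2)
    (hi : b.val.2.1 = a.val.2.1 + 1) (hd : 2 ^ 2 ^ (2 * a.val.1 + 1) ∣ a.val.2.2) :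
    (Ytotal f).Adj a b :=
  ⟨fun h => by rw [h] at hi; omega, hP, Or.inl (Or.inr ⟨hy, hd, hi⟩)⟩

def segment : (d : ℕ) → (a b : YTVert f) → a.val.1 = b.val.1 → a.val.2.1 = b.val.2.1 →
    b.val.2.2 = a.val.2.2 + d → (Ytotal f).Walk a b
  | 0, _, _, hP, hi, hy => Walk.nil.copy rfl (Subtype.ext (Prod.ext hP (Prod.ext hi hy.symm)))
  | d + 1, a, b, hP, hi, hy =>
    have hle : a.val.2.2 + 1 ≤ 2 ^ 2 ^ (2 * a.val.1 + 1) * f a.val.1 := by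
      rw [hP]; have := b.prop.2.2; omega
    let a' : YTVert f := ⟨(a.val.1, a.val.2.1, a.val.2.2 + 1), a.prop.1, a.prop.2.1, hle⟩
    Walk.cons (adj_of_vertical (b := a') rfl rfl rfl)
      (segment d a' b hP hi (by simp [a', hy]; omega))

lemma mem_support_segment {x : YTVert f} : ∀ {d : ℕ} {a b : YTVert f} {hP hi hy},
    x ∈ (segment d a b hP hi hy).support →
      ∃ k ≤ d, x.val = (a.val.1, a.val.2.1, a.val.2.2 + k)
  | 0, a, b, hP, hi, hy, hx => by
    erw [segment, Walk.support_copy, Walk.support_nil, List.mem_singleton] at hx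
    exact ⟨0, le_rfl, by rw [hx]; rfl⟩
  | d + 1, a, b, hP, hi, hy, hx => by
    erw [segment, Walk.support_cons, List.mem_cons] at hx
    rcases hx with rfl | hx
    · exact ⟨0, by omega, rfl⟩
    · obtain ⟨k, hk, hxk⟩ := mem_support_segment hx
      exact ⟨k + 1, by omega, by rw [hxk]; simp only [add_assoc, add_comm 1 k]⟩

lemma mem_edges_segment {e : Sym2 (YTVert f)} : ∀ {d : ℕ} {a b : YTVert f} {hP hi hy},
    e ∈ (segment d a b hP hi hy).edges → ∃ k < d,
      e.map Subtype.val = s((a.val.1, a.val.2.1, a.val.2.2 + k),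
        (a.val.1, a.val.2.1, a.val.2.2 + k + 1))
  | 0, a, b, hP, hi, hy, he => by
    erw [segment, Walk.edges_copy, Walk.edges_nil] at he
    simp at he
  | d + 1, a, b, hP, hi, hy, he => by
    erw [segment, Walk.edges_cons, List.mem_cons] at he
    rcases he with rfl | he
    · exact ⟨0, by omega, rfl⟩
    · obtain ⟨k, hk, hek⟩ := mem_edges_segment he
      exact ⟨k + 1, by omega, by rw [hek]; simp only [add_assoc, add_comm 1 k]⟩

lemma ncard_low_pieces_le {n : ℕ} (hle : ∀ m, 1 ≤ m → f m ≤ m)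
    (hn : 2 ≤ f n) :
    {x : YTVert f | x.val.1 < n}.Finite ∧
      {x : YTVert f | x.val.1 < n}.ncard ≤ (2 ^ 2 ^ (2 * n) * f n + 1) * f n := by
  obtain rfl | ⟨k, rfl⟩ : n = 0 ∨ ∃ k, n = k + 1 := by rcases n with _ | k <;> simp
  · simp
  set T := 2 ^ 2 ^ (2 * k + 1)
  set box := Finset.Icc 1 k ×ˢ Finset.range k ×ˢ Finset.range (T * k + 1)
  have hbox : ∀ x ∈ {x : YTVert f | x.val.1 < k + 1}, 
      x.val ∈ (box : Set (ℕ × ℕ × ℕ)) := by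
    intro x hx
    obtain ⟨h1, h2, h3⟩ := x.prop
    replace hx : x.val.1 < k + 1 := hx
    have hfm := hle _ h1
    have hT : 2 ^ 2 ^ (2 * x.val.1 + 1) ≤ T := two_pow_two_pow_mono (by omega)
    simp only [box, Finset.coe_product, Set.mem_prod, Finset.coe_Icc, Set.mem_Icc,
      Finset.coe_range, Set.mem_Iio]
    refine ⟨⟨h1, by omega⟩, by omega, ?_⟩
    have := Nat.mul_le_mul hT (hfm.trans (show x.val.1 ≤ k by omega))
    omega
  refine ⟨Set.Finite.subset (box.finite_toSet.preimage Subtype.val_injective.injOn) hbox, ?_⟩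
  refine (Set.ncard_le_ncard_of_injOn _ hbox Subtype.val_injective.injOn).trans ?_
  rw [Set.ncard_coe_finset, Finset.card_product, Finset.card_product, Nat.card_Icc,
    Finset.card_range, Finset.card_range, Nat.add_sub_cancel,
    show 2 * (k + 1) = 2 * k + 1 + 1 by ring, two_pow_two_pow_succ]
  have hcube : k * k * k + 1 ≤ T := cube_lt_two_pow_two_pow k
  have hsq : k * k ≤ T := by
    rcases Nat.eq_zero_or_pos k with rfl | hk
    · omega
    · exact le_trans (Nat.le_mul_of_pos_right _ hk) (by omega)
  calc k * (k * (T * k + 1)) = T * (k * k * k) + k * k := by ring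
    _ ≤ T * (k * k * k + 1) := by rw [mul_add_one]; omega
    _ ≤ T * T := Nat.mul_le_mul_left _ hcube
    _ ≤ T * T * f (k + 1) := Nat.le_mul_of_pos_right _ (by omega)
    _ ≤ (T * T * f (k + 1) + 1) * f (k + 1) :=
      (Nat.le_succ _).trans (Nat.le_mul_of_pos_right _ (by omega))

end Ytotal

namespace ColumnWiring

open SimpleGraph

variable {f : ℕ → ℕ} {Γ : (Xtotal f).Subgraph}

abbrev idx (v : Γ.verts) : ℕ := v.val.val.1
abbrev col (v : Γ.verts) : ℕ := v.val.val.2.1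
abbrev ht (v : Γ.verts) : ℕ := v.val.val.2.2

variable {u v : Γ.verts}

lemma ext_coords (h1 : idx u = idx v) (h2 : col u = col v) (h3 : ht u = ht v) : u = v :=
  Subtype.ext (Subtype.ext (Prod.ext h1 (Prod.ext h2 h3)))

lemma coords_bound (v : Γ.verts) :
    1 ≤ idx v ∧ col v < f (idx v) ∧ ht v ≤ 2 ^ 2 ^ (2 * idx v) * f (idx v) :=
  v.val.prop

lemma adj_cases (h : Γ.coe.Adj u v) : idx u = idx v ∧
    ((col v = col u ∧ ht v = ht u + 1) ∨
      (col v = col u + 1 ∧ ht v = ht u ∧ 2 ^ 2 ^ (2 * idx u) ∣ ht u) ∨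
      (col u = col v ∧ ht u = ht v + 1) ∨
      (col u = col v + 1 ∧ ht u = ht v ∧ 2 ^ 2 ^ (2 * idx u) ∣ ht v)) := by
  obtain ⟨-, hidx, (⟨h1, h2⟩ | ⟨h1, hd, h2⟩) | (⟨h1, h2⟩ | ⟨h1, hd, h2⟩)⟩ :=
    Γ.adj_sub h
  · exact ⟨hidx, Or.inl ⟨h1.symm, h2⟩⟩
  · exact ⟨hidx, Or.inr (Or.inl ⟨h2, h1.symm, hd⟩)⟩
  · exact ⟨hidx, Or.inr (Or.inr (Or.inl ⟨h1.symm, h2⟩))⟩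
  · exact ⟨hidx, Or.inr (Or.inr (Or.inr ⟨h2, h1.symm, hd⟩))⟩

lemma idx_eq_of_adj (h : Γ.coe.Adj u v) : idx u = idx v := (adj_cases h).1

lemma ht_le_of_adj (h : Γ.coe.Adj u v) : ht v ≤ ht u + 1 := by
  have := (adj_cases h).2; omega

lemma potential_ne_of_adj (h : Γ.coe.Adj u v) : col u + ht u ≠ col v + ht v := by
  have := (adj_cases h).2; omega

lemma dvd_of_adj_of_ht_eq (h : Γ.coe.Adj u v) (he : ht u = ht v) :
    2 ^ 2 ^ (2 * idx u) ∣ ht u := by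
  rcases (adj_cases h).2 with ⟨-, h1⟩ | ⟨-, -, hd⟩ | ⟨-, h1⟩ | ⟨-, -, hd⟩
  · omega
  · exact hd
  · omega
  · rwa [he]

lemma step_of_adj (h : Γ.coe.Adj u v) (hlt : col u + ht u < col v + ht v) :
    (col v = col u ∧ ht v = ht u + 1) ∨
      (col v = col u + 1 ∧ ht v = ht u ∧ 2 ^ 2 ^ (2 * idx u) ∣ ht u) := by
  rcases (adj_cases h).2 with h1 | h1 | h1 | h1
  · exact Or.inl h1
  · exact Or.inr h1
  all_goals omega

abbrev cmp (v : Γ.verts) : Γ.coe.ConnectedComponent := Γ.coe.connectedComponentMk v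

lemma idx_eq_of_cmp_eq (h : cmp u = cmp v) : idx u = idx v := by
  obtain ⟨p⟩ := ConnectedComponent.exact h
  clear h
  induction p with
  | nil => rfl
  | cons hadj _ ih => exact (idx_eq_of_adj hadj).trans ih

lemma ht_le_add_length (p : Γ.coe.Walk u v) : ht v ≤ ht u + p.length := by
  induction p with
  | nil => simp
  | cons hadj _ ih => have := ht_le_of_adj hadj; rw [Walk.length_cons]; omega

lemma ht_lt_add_ncard (hfin : Γ.verts.Finite) (h : cmp u = cmp v) :
    ht v < ht u + Γ.verts.ncard := by
  have := hfin.fintype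
  classical
  obtain ⟨p⟩ := ConnectedComponent.exact h
  have hlen := p.bypass_isPath.length_lt
  rw [← Nat.card_eq_fintype_card, Nat.card_coe_set_eq] at hlen
  have := ht_le_add_length p.bypass
  omega

open Classical in
/-- The height shared by all horizontal edges of a component, when there is one. -/
noncomputable def level (c : Γ.coe.ConnectedComponent) : ℕ :=
  if h : ∃ x, cmp x = c ∧ ∀ y z, cmp y = c → Γ.coe.Adj y z → ht y = ht z → ht y = ht x
  then ht h.choose else 0

/-- Heights in a component differ by less than `Γ.verts.ncard`, so they contain at most one
multiple of a larger spacing. -/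
lemma level_spec (hfin : Γ.verts.Finite) (v : Γ.verts)
    (hsp : Γ.verts.ncard ≤ 2 ^ 2 ^ (2 * idx v)) :
    (∃ x, cmp x = cmp v ∧ ht x = level (cmp v)) ∧
      ∀ y z, cmp y = cmp v → Γ.coe.Adj y z → ht y = ht z → ht y = level (cmp v) := by
  have hex : ∃ x, cmp x = cmp v ∧
      ∀ y z, cmp y = cmp v → Γ.coe.Adj y z → ht y = ht z → ht y = ht x := by
    by_cases hhor : ∃ y z, cmp y = cmp v ∧ Γ.coe.Adj y z ∧ ht y = ht z
    · obtain ⟨x, x', hx, hxx', hht⟩ := hhor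
      refine ⟨x, hx, fun y z hy hyz hyz' => ?_⟩
      have hdx := dvd_of_adj_of_ht_eq hxx' hht
      have hdy := dvd_of_adj_of_ht_eq hyz hyz'
      rw [idx_eq_of_cmp_eq hx] at hdx
      rw [idx_eq_of_cmp_eq hy] at hdy
      have h1 := ht_lt_add_ncard hfin (hx.trans hy.symm)
      have h2 := ht_lt_add_ncard hfin (hy.trans hx.symm)
      exact Nat.eq_of_dvd_of_lt_add hdy hdx (by omega) (by omega)
    · exact ⟨v, rfl, fun y z hy hyz hyz' => absurd ⟨y, z, hy, hyz, hyz'⟩ hhor⟩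
  have hlev : level (cmp v) = ht hex.choose := by rw [level, dif_pos hex]
  exact ⟨⟨hex.choose, hex.choose_spec.1, hlev.symm⟩,
    fun y z hy hyz hyz' => hlev ▸ hex.choose_spec.2 y z hy hyz hyz'⟩

structure Setup (f : ℕ → ℕ) (n : ℕ) (Γ : (Xtotal f).Subgraph) : Prop where
  f_one : f 1 = 1
  f_le : ∀ m, 2 ≤ m → 2 ≤ f m ∧ f m ≤ m
  infinite : ∀ k, 2 ≤ k → {x | f x = k}.Infinite
  two_le : 2 ≤ f n
  finite : Γ.verts.Finite
  ncard_le : Γ.verts.ncard ≤ (2 ^ 2 ^ (2 * n) * f n + 1) * f n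

variable {n : ℕ}

noncomputable def fresh (f : ℕ → ℕ) (n k i : ℕ) : ℕ :=
  Nat.nth (fun x => f x = k) (n + f n + 1 + i)

section Fresh

variable {k k' i i' : ℕ}

lemma f_fresh (hk : {x | f x = k}.Infinite) : f (fresh f n k i) = k :=
  Nat.nth_mem_of_infinite hk _

lemma le_fresh (hk : {x | f x = k}.Infinite) : n + f n + 1 + i ≤ fresh f n k i :=
  (Nat.nth_strictMono hk).le_apply

lemma fresh_inj (hk : {x | f x = k}.Infinite) (hk' : {x | f x = k'}.Infinite)
    (h : fresh f n k i = fresh f n k' i') : k = k' ∧ i = i' := by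
  obtain rfl : k = k' := by rw [← f_fresh (n := n) (i := i) hk, h, f_fresh hk']
  exact ⟨rfl, by have := Nat.nth_injective hk h; omega⟩

end Fresh

instance : Countable (XTVert f) := by unfold XTVert; infer_instance

instance : Countable Γ.coe.ConnectedComponent := inferInstanceAs (Countable (Quot _))

noncomputable def enc (Γ : (Xtotal f).Subgraph) : Γ.coe.ConnectedComponent → ℕ :=
  (Countable.exists_injective_nat _).choose

lemma enc_injective : Function.Injective (enc Γ) :=
  (Countable.exists_injective_nat _).choose_spec

inductive Block (Γ : (Xtotal f).Subgraph) : Type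
  | collapsed (m : ℕ)
  | scaled (m : ℕ)
  | shifted (m : ℕ) (c : Γ.coe.ConnectedComponent)

def block (n : ℕ) (v : Γ.verts) : Block Γ :=
  if f (idx v) ≤ f n then .collapsed (idx v)
  else if idx v < n then .scaled (idx v)
  else .shifted (idx v) (cmp v)

namespace Block

noncomputable def piece (n : ℕ) : Block Γ → ℕ
  | collapsed m => fresh f n (f n) m
  | scaled m => m
  | shifted m c => fresh f n (f m) (enc Γ c)

def scale : Block Γ → ℕ
  | scaled m => 2 ^ 2 ^ (2 * m)
  | _ => 1

def ycol : Block Γ → ℕ → ℕ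
  | collapsed _, _ => 0
  | _, i => i

/-- The column forgotten by `ycol`. -/
def tag : Block Γ → ℕ → ℕ
  | collapsed _, i => i
  | _, _ => 0

noncomputable def yht (n : ℕ) : Block Γ → ℕ → ℕ
  | collapsed _, j => j
  | scaled m, j => 2 ^ 2 ^ (2 * m) * j
  -- no truncation for the heights `j` of `c`, by `Setup.level_near` and `Setup.ncard_lt_fresh`
  | shifted m c, j => j + 2 ^ 2 ^ (2 * fresh f n (f m) (enc Γ c) + 1) - level c

lemma ycol_add_tag (b : Block Γ) (i : ℕ) : b.ycol i + b.tag i = i := by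
  cases b <;> simp [ycol, tag]

lemma one_le_scale (b : Block Γ) : 1 ≤ b.scale := by
  cases b
  · exact le_rfl
  · exact Nat.one_le_two_pow
  · exact le_rfl

end Block

lemma block_eq_of_cmp_eq (h : cmp u = cmp v) : block n u = block n v := by
  simp only [block, idx_eq_of_cmp_eq h, h]

lemma idx_eq_of_block_eq (h : block n u = block n v) : idx u = idx v := by
  unfold block at h
  split_ifs at h <;> simp_all

lemma Setup.f_le_self (S : Setup f n Γ) {m : ℕ} (hm : 1 ≤ m) : f m ≤ m := by
  rcases Nat.lt_or_ge m 2 with h | h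
  · obtain rfl : m = 1 := by omega
    exact S.f_one.le
  · exact (S.f_le m h).2

lemma Setup.lt_idx (S : Setup f n Γ) (hf : ¬ f (idx v) ≤ f n) (hlt : ¬ idx v < n) :
    n < idx v ∧ f n < idx v := by
  have h1 := (coords_bound v).1
  have h2 := S.f_le_self h1
  exact ⟨lt_of_le_of_ne (not_lt.1 hlt) fun h => hf (h ▸ le_rfl), by omega⟩

lemma Setup.ncard_lt_spacing (S : Setup f n Γ) {m : ℕ} (hn : n < m) (hfn : f n < m) :
    Γ.verts.ncard < 2 ^ 2 ^ (2 * m) :=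
  S.ncard_le.trans_lt (size_lt_two_pow_two_pow hn hfn)

lemma Setup.level_near (S : Setup f n Γ) (hf : ¬ f (idx v) ≤ f n) (hlt : ¬ idx v < n) :
    level (cmp v) < ht v + Γ.verts.ncard ∧ ht v < level (cmp v) + Γ.verts.ncard := by
  have hm := S.lt_idx hf hlt
  obtain ⟨x, hx, hxl⟩ := (level_spec S.finite v (S.ncard_lt_spacing hm.1 hm.2).le).1
  rw [← hxl]
  exact ⟨ht_lt_add_ncard S.finite hx.symm, ht_lt_add_ncard S.finite hx⟩

lemma Setup.ht_eq_level (S : Setup f n Γ) (hf : ¬ f (idx v) ≤ f n) (hlt : ¬ idx v < n)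
    {y z : Γ.verts} (hy : cmp y = cmp v) (hyz : Γ.coe.Adj y z) (he : ht y = ht z) :
    ht y = level (cmp v) := by
  have hm := S.lt_idx hf hlt
  exact (level_spec S.finite v (S.ncard_lt_spacing hm.1 hm.2).le).2 y z hy hyz he

lemma Setup.ncard_lt_fresh (S : Setup f n Γ) {k i : ℕ} (hk : 2 ≤ k) :
    Γ.verts.ncard < 2 ^ 2 ^ (2 * fresh f n k i + 1) := by
  have := le_fresh (n := n) (i := i) (S.infinite k hk)
  exact (S.ncard_lt_spacing (m := fresh f n k i) (by omega) (by omega)).trans_le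
    (two_pow_two_pow_mono (by omega))

lemma Setup.yht_add (S : Setup f n Γ) (u : Γ.verts) {j : ℕ} (hj : ht u ≤ j) :
    (block n u).yht n j = (block n u).yht n (ht u) + (block n u).scale * (j - ht u) := by
  unfold block
  split_ifs with hf hlt
  · simp only [Block.yht, Block.scale]; omega
  · simp only [Block.yht, Block.scale]
    rw [← mul_add]; congr 1; omega
  · have := S.level_near hf hlt
    have := S.ncard_lt_fresh (k := f (idx u)) (i := enc Γ (cmp u)) (by have := S.two_le; omega)
    simp only [Block.yht, Block.scale]
    omega

lemma Setup.block_eq_of_piece_eq (S : Setup f n Γ)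
    (h : (block n u).piece n = (block n v).piece n) : block n u = block n v := by
  have hn := S.two_le
  have hinf := S.infinite
  unfold block at h ⊢
  split_ifs at h ⊢ <;> simp only [Block.piece] at h
  · rw [(fresh_inj (hinf _ hn) (hinf _ hn) h).2]
  · have := le_fresh (n := n) (i := idx u) (hinf _ hn); omega
  · exact absurd (fresh_inj (hinf _ hn) (hinf _ (by omega)) h).1 (by omega)
  · have := le_fresh (n := n) (i := idx v) (hinf _ hn); omega
  · rw [h]
  · have := le_fresh (n := n) (i := enc Γ (cmp v)) (hinf (f (idx v)) (by omega)); omega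
  · exact absurd (fresh_inj (hinf _ (by omega)) (hinf _ hn) h).1 (by omega)
  · have := le_fresh (n := n) (i := enc Γ (cmp u)) (hinf (f (idx u)) (by omega)); omega
  · have hc := enc_injective (fresh_inj (hinf _ (by omega)) (hinf _ (by omega)) h).2
    rw [hc, idx_eq_of_cmp_eq hc]

lemma Setup.tag_lt (S : Setup f n Γ) (v : Γ.verts) : (block n v).tag (col v) < f n := by
  have := S.two_le
  unfold block
  split_ifs with hf
  · exact (coords_bound v).2.1.trans_le hf
  all_goals simp only [Block.tag]; omega

lemma piece_lt_of_scale_ne_one (h : (block n v).scale ≠ 1) : (block n v).piece n < n := by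
  unfold block at h ⊢
  split_ifs at h ⊢ with hf hlt
  · exact absurd rfl h
  · exact hlt
  · exact absurd rfl h

noncomputable def place (n : ℕ) (v : Γ.verts) : ℕ × ℕ × ℕ :=
  ((block n v).piece n, (block n v).ycol (col v), (block n v).yht n (ht v))

lemma Setup.place_mem (S : Setup f n Γ) (v : Γ.verts) :
    1 ≤ (place n v).1 ∧ (place n v).2.1 < f (place n v).1 ∧
      (place n v).2.2 ≤ 2 ^ 2 ^ (2 * (place n v).1 + 1) * f (place n v).1 := by
  have hn := S.two_le
  obtain ⟨h1, h2, h3⟩ := coords_bound v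
  simp only [place]
  unfold block
  split_ifs with hf hlt <;> simp only [Block.piece, Block.ycol, Block.yht]
  · have hP := le_fresh (n := n) (i := idx v) (S.infinite _ hn)
    rw [f_fresh (S.infinite _ hn)]
    refine ⟨by omega, by omega, h3.trans (Nat.mul_le_mul (two_pow_two_pow_mono ?_) hf)⟩
    omega
  · refine ⟨h1, h2, ?_⟩
    rw [two_pow_two_pow_succ, mul_assoc]
    exact Nat.mul_le_mul_left _ h3
  · have hk : 2 ≤ f (idx v) := by omega
    rw [f_fresh (S.infinite _ hk)]
    have hP := le_fresh (n := n) (i := enc Γ (cmp v)) (S.infinite _ hk)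
    have hT := S.ncard_lt_fresh (i := enc Γ (cmp v)) hk
    have hl := S.level_near hf hlt
    refine ⟨by omega, h2, ?_⟩
    have := Nat.mul_le_mul_left (2 ^ 2 ^ (2 * fresh f n (f (idx v)) (enc Γ (cmp v)) + 1)) hk
    omega

noncomputable def toY (S : Setup f n Γ) (v : Γ.verts) : YTVert f := ⟨place n v, S.place_mem v⟩

lemma block_eq_of_adj (h : Γ.coe.Adj u v) : block n u = block n v :=
  block_eq_of_cmp_eq (ConnectedComponent.sound h.reachable)

lemma Setup.place_of_step (S : Setup f n Γ) (h : Γ.coe.Adj u v)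
    (hlt : col u + ht u < col v + ht v) :
    (place n v).1 = (place n u).1 ∧
      ((ht v = ht u + 1 ∧ (place n v).2.1 = (place n u).2.1 ∧
          (place n v).2.2 = (place n u).2.2 + (block n u).scale) ∨
        (ht v = ht u ∧ (place n v).2.1 = (place n u).2.1 + 1 ∧
          (place n v).2.2 = (place n u).2.2 ∧
          2 ^ 2 ^ (2 * (place n u).1 + 1) ∣ (place n u).2.2) ∨
        (ht v = ht u ∧ place n v = place n u)) := by
  have hb := block_eq_of_adj (n := n) h
  refine ⟨by simp only [place, hb], ?_⟩
  simp only [place, ← hb]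
  rcases step_of_adj h hlt with ⟨hc, hh⟩ | ⟨hc, hh, hd⟩
  · left
    refine ⟨hh, by rw [hc], ?_⟩
    rw [S.yht_add u (by omega), hh, Nat.add_sub_cancel_left, mul_one]
  · right
    rw [hc, hh]
    unfold block
    split_ifs with hf hlt'
    · exact Or.inr ⟨rfl, rfl⟩
    · refine Or.inl ⟨rfl, rfl, rfl, ?_⟩
      simp only [Block.piece, Block.yht]
      rw [two_pow_two_pow_succ]
      exact mul_dvd_mul_left _ hd
    · refine Or.inl ⟨rfl, rfl, rfl, ?_⟩
      simp only [Block.piece, Block.yht]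
      rw [S.ht_eq_level hf hlt' rfl h hh.symm, Nat.add_sub_cancel_left]

lemma Setup.place_of_step_of_ycol_eq (S : Setup f n Γ) (h : Γ.coe.Adj u v)
    (hlt : col u + ht u < col v + ht v) (hc : (place n u).2.1 = (place n v).2.1) :
    (place n v).2.2 = (place n u).2.2 + (block n u).scale * (ht v - ht u) ∧
      ht v - ht u ≤ 1 := by
  rcases (S.place_of_step h hlt).2 with ⟨h1, -, h3⟩ | ⟨-, h2, -⟩ | ⟨h1, h2⟩
  · rw [h3, h1]; simp
  · omega
  · rw [h2, h1]; simp

lemma Setup.place_of_step_of_ycol_ne (S : Setup f n Γ) (h : Γ.coe.Adj u v)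
    (hlt : col u + ht u < col v + ht v) (hc : (place n u).2.1 ≠ (place n v).2.1) :
    ht v = ht u ∧ (place n v).2.1 = (place n u).2.1 + 1 ∧ (place n v).2.2 = (place n u).2.2 ∧
      2 ^ 2 ^ (2 * (place n u).1 + 1) ∣ (place n u).2.2 := by
  rcases (S.place_of_step h hlt).2 with ⟨-, h2, -⟩ | h2 | ⟨-, h2⟩
  · exact absurd h2.symm hc
  · exact h2
  · exact absurd (by rw [h2]) hc

noncomputable def link (S : Setup f n Γ) (u v : Γ.verts) (h : Γ.coe.Adj u v)
    (hlt : col u + ht u < col v + ht v) : (Ytotal f).Walk (toY S u) (toY S v) :=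
  if hc : (place n u).2.1 = (place n v).2.1 then
    Ytotal.segment ((place n v).2.2 - (place n u).2.2) (toY S u) (toY S v)
      (S.place_of_step h hlt).1.symm hc
      (by
        have := (S.place_of_step_of_ycol_eq h hlt hc).1
        show (place n v).2.2 = (place n u).2.2 + ((place n v).2.2 - (place n u).2.2)
        omega)
  else
    have hs := S.place_of_step_of_ycol_ne h hlt hc
    .cons (Ytotal.adj_of_horizontal (a := toY S u) (b := toY S v) (S.place_of_step h hlt).1.symm
      hs.2.2.1.symm hs.2.1 hs.2.2.2) .nil

lemma Setup.mem_edges_link (S : Setup f n Γ) {h : Γ.coe.Adj u v}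
    {hlt : col u + ht u < col v + ht v} {e : Sym2 (YTVert f)}
    (he : e ∈ (link S u v h hlt).edges) :
    ∃ y, (place n u).2.2 ≤ y ∧ y < (place n u).2.2 + (block n u).scale ∧
      e.map Subtype.val = s(((place n u).1, (place n u).2.1, y),
        ((place n u).1, (place n v).2.1, y + (ht v - ht u))) ∧
      (place n v).2.1 + (ht v - ht u) = (place n u).2.1 + 1 := by
  unfold link at he
  split_ifs at he with hc
  · obtain ⟨k, hk, hek⟩ := Ytotal.mem_edges_segment he
    replace hk : k < (place n v).2.2 - (place n u).2.2 := hk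
    obtain ⟨hv, h1⟩ := S.place_of_step_of_ycol_eq h hlt hc
    have hup : ht v - ht u = 1 := by
      by_contra h0
      rw [show ht v - ht u = 0 by omega, mul_zero] at hv
      omega
    rw [hup, mul_one] at hv
    refine ⟨(place n u).2.2 + k, by omega, by omega, ?_, by omega⟩
    rw [hek, hup, ← hc]
    rfl
  · obtain ⟨hh, hc', hy, -⟩ := S.place_of_step_of_ycol_ne h hlt hc
    have := (block n u).one_le_scale
    refine ⟨(place n u).2.2, le_rfl, by omega, ?_, by omega⟩
    rw [Walk.edges_cons, Walk.edges_nil, List.mem_singleton] at he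
    subst he
    have hpv : place n v = ((place n u).1, (place n v).2.1, (place n u).2.2 + (ht v - ht u)) :=
      Prod.ext (S.place_of_step h hlt).1 (Prod.ext rfl (by dsimp only; omega))
    show s(place n u, place n v) = _
    rw [hpv]

lemma Setup.mem_support_link (S : Setup f n Γ) {h : Γ.coe.Adj u v}
    {hlt : col u + ht u < col v + ht v} {x : YTVert f} (hx : x ∈ (link S u v h hlt).support) :
    x = toY S u ∨ x = toY S v ∨ x.val.1 < n := by
  unfold link at hx
  split_ifs at hx with hc
  · obtain ⟨k, hk, hxk⟩ := Ytotal.mem_support_segment hx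
    replace hk : k ≤ (place n v).2.2 - (place n u).2.2 := hk
    obtain ⟨hv, h1⟩ := S.place_of_step_of_ycol_eq h hlt hc
    by_cases hs : (block n u).scale = 1
    · rw [hs, one_mul] at hv
      rcases Nat.eq_zero_or_pos k with rfl | hk0
      · exact Or.inl (Subtype.ext hxk)
      · refine Or.inr (Or.inl (Subtype.ext ?_))
        rw [hxk]
        refine Prod.ext (S.place_of_step h hlt).1.symm (Prod.ext hc ?_)
        show (place n u).2.2 + k = (place n v).2.2
        omega
    · have hx1 : x.val.1 = (block n u).piece n := by rw [hxk]; rfl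
      rw [hx1]
      exact Or.inr (Or.inr (piece_lt_of_scale_ne_one hs))
  · simp only [Walk.support_cons, Walk.support_nil, List.mem_cons, List.not_mem_nil,
      or_false] at hx
    rcases hx with rfl | rfl
    · exact Or.inl rfl
    · exact Or.inr (Or.inl rfl)

lemma Setup.ht_eq_of_place (S : Setup f n Γ) {u' : Γ.verts} (hb : block n u = block n u')
    {y : ℕ}
    (h1 : (place n u).2.2 ≤ y) (h2 : y < (place n u).2.2 + (block n u).scale)
    (h1' : (place n u').2.2 ≤ y) (h2' : y < (place n u').2.2 + (block n u).scale) :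
    ht u = ht u' := by
  wlog hle : ht u ≤ ht u' generalizing u u'
  · exact (this hb.symm h1' (hb ▸ h2') h1 (hb ▸ h2) (by omega)).symm
  have hadd := S.yht_add u hle
  simp only [place, ← hb] at h1' h2' h1 h2
  rw [hadd] at h1'
  by_contra hne
  have : (block n u).scale ≤ (block n u).scale * (ht u' - ht u) :=
    Nat.le_mul_of_pos_right _ (by omega)
  omega

lemma Setup.eq_of_place_eq (S : Setup f n Γ) {u' : Γ.verts} (h : place n u = place n u')
    (htag : (block n u).tag (col u) = (block n u').tag (col u')) : u = u' := by
  have hb := S.block_eq_of_piece_eq (congrArg Prod.fst h)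
  have := (block n u).one_le_scale
  refine ext_coords (idx_eq_of_block_eq hb) ?_
    (S.ht_eq_of_place hb le_rfl (by omega) (congrArg (·.2.2) h).ge (by rw [← h]; omega))
  rw [← Block.ycol_add_tag (block n u) (col u), ← Block.ycol_add_tag (block n u') (col u'),
    htag]
  exact congrArg (· + _) (congrArg (·.2.1) h)

lemma eq_of_step_of_ht_eq {v' : Γ.verts} (h : Γ.coe.Adj u v) (h' : Γ.coe.Adj u v')
    (hlt : col u + ht u < col v + ht v) (hlt' : col u + ht u < col v' + ht v')
    (he : ht v = ht v') : v = v' := by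
  refine ext_coords ((idx_eq_of_adj h).symm.trans (idx_eq_of_adj h')) ?_ he
  have := step_of_adj h hlt
  have := step_of_adj h' hlt'
  omega

lemma Setup.eq_of_mem_edges_link (S : Setup f n Γ) {u' v' : Γ.verts} {h : Γ.coe.Adj u v}
    {h' : Γ.coe.Adj u' v'} {hlt : col u + ht u < col v + ht v}
    {hlt' : col u' + ht u' < col v' + ht v'} {e : Sym2 (YTVert f)}
    (he : e ∈ (link S u v h hlt).edges) (he' : e ∈ (link S u' v' h' hlt').edges)
    (htag : (block n u).tag (col u) = (block n u').tag (col u')) : u = u' ∧ v = v' := by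
  obtain ⟨y, hy1, hy2, hey, hφ⟩ := S.mem_edges_link he
  obtain ⟨y', hy1', hy2', hey', hφ'⟩ := S.mem_edges_link he'
  obtain ⟨hp, hq⟩ := Sym2.eq_and_eq_of_lt (fun p : ℕ × ℕ × ℕ => p.2.1 + p.2.2)
    (hey.symm.trans hey') (by dsimp only; omega) (by dsimp only; omega)
  simp only [Prod.mk.injEq] at hp hq
  obtain ⟨hP, hc, rfl⟩ := hp
  have hb := S.block_eq_of_piece_eq hP
  have hht := S.ht_eq_of_place hb hy1 hy2 hy1' (hb ▸ hy2')
  obtain rfl : u = u' := S.eq_of_place_eq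
    (Prod.ext hP (Prod.ext hc (by simp only [place, hb, hht]))) htag
  refine ⟨rfl, eq_of_step_of_ht_eq h h' hlt hlt' ?_⟩
  have := step_of_adj h hlt
  have := step_of_adj h' hlt'
  omega

lemma Setup.ncard_fiber_le (S : Setup f n Γ) (x : YTVert f) :
    {v | toY S v = x}.ncard ≤ f n :=
  Set.ncard_le_of_injOn_lt (fun v _ => S.tag_lt v) fun _ hv _ hv' htag =>
    S.eq_of_place_eq (congrArg Subtype.val (hv.trans hv'.symm)) htag

lemma Setup.ncard_congestion_le (S : Setup f n Γ) (e : Sym2 (YTVert f)) :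
    {p : Γ.verts × Γ.verts | ∃ h hlt, e ∈ (link S p.1 p.2 h hlt).edges}.ncard ≤ f n :=
  Set.ncard_le_of_injOn_lt (g := fun p => (block n p.1).tag (col p.1)) (fun p _ => S.tag_lt p.1)
    fun _ ⟨_, _, he⟩ _ ⟨_, _, he'⟩ htag =>
      Prod.ext (S.eq_of_mem_edges_link he he' htag).1 (S.eq_of_mem_edges_link he he' htag).2

noncomputable def wiring (S : Setup f n Γ) : Wiring Γ.coe (Ytotal f) :=
  Wiring.ofPotential (toY S) (fun v => col v + ht v) (fun _ _ h => potential_ne_of_adj h) (link S)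

lemma Setup.isCoarse (S : Setup f n Γ) : (wiring S).IsCoarse (f n) :=
  have := S.finite.to_subtype
  Wiring.isCoarse_ofPotential S.ncard_fiber_le S.ncard_congestion_le

lemma Setup.volume_le (S : Setup f n Γ) :
    (wiring S).volume ≤ 2 * ((2 ^ 2 ^ (2 * n) * f n + 1) * f n) := by
  have := S.finite.to_subtype
  obtain ⟨hlow_fin, hlow⟩ := Ytotal.ncard_low_pieces_le (fun m hm => S.f_le_self hm) S.two_le
  have hsub : (wiring S).imageVerts ⊆ Set.range (toY S) ∪ {x : YTVert f | x.val.1 < n} := by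
    refine (Wiring.imageVerts_ofPotential_subset).trans (Set.union_subset Set.subset_union_left ?_)
    rintro x ⟨u, v, h, hlt, hx⟩
    rcases S.mem_support_link hx with rfl | rfl | hx
    · exact Or.inl ⟨u, rfl⟩
    · exact Or.inl ⟨v, rfl⟩
    · exact Or.inr hx
  have hrange : (Set.range (toY S)).ncard ≤ Γ.verts.ncard := by
    rw [← Set.image_univ, ← Nat.card_coe_set_eq Γ.verts, ← Set.ncard_univ]
    exact Set.ncard_image_le Set.finite_univ
  calc (wiring S).volume ≤ (Set.range (toY S) ∪ {x : YTVert f | x.val.1 < n}).ncard :=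
        Set.ncard_le_ncard hsub ((Set.finite_range _).union hlow_fin)
    _ ≤ (Set.range (toY S)).ncard + {x : YTVert f | x.val.1 < n}.ncard := Set.ncard_union_le _ _
    _ ≤ Γ.verts.ncard + {x : YTVert f | x.val.1 < n}.ncard := Nat.add_le_add_right hrange _
    _ ≤ _ := by rw [two_mul]; exact Nat.add_le_add S.ncard_le hlow

lemma Setup.exists_wiring (S : Setup f n Γ) : ∃ Wr : Wiring Γ.coe (Ytotal f),
    Wr.IsCoarse (f n) ∧ Wr.volume ≤ 2 * ((2 ^ 2 ^ (2 * n) * f n + 1) * f n) :=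
  ⟨wiring S, S.isCoarse, S.volume_le⟩

end ColumnWiring

theorem statement4_general
    (f : ℕ → ℕ)
    (hf1 : f 1 = 1)
    (hf : ∀ n, 2 ≤ n → 2 ≤ f n ∧ f n ≤ n)
    (hinf : ∀ k, 2 ≤ k → {n | f n = k}.Infinite)
    (n : ℕ) (hn : 2 ≤ f n) :
    (∀ Γ : (Xtotal f).Subgraph, Γ.verts.Finite →
        Γ.verts.ncard ≤ (2 ^ 2 ^ (2 * n) * f n + 1) * f n →
        ∃ Wr : Wiring Γ.coe (Ytotal f), Wr.IsCoarse (f n) ∧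
          Wr.volume ≤ 2 * ((2 ^ 2 ^ (2 * n) * f n + 1) * f n)) ∧
      wirProfile (Xtotal f) (Ytotal f) (f n) ((2 ^ 2 ^ (2 * n) * f n + 1) * f n) ≤
        ((2 * ((2 ^ 2 ^ (2 * n) * f n + 1) * f n) : ℕ) : ℕ∞) := by
  have hwire := fun (Γ : (Xtotal f).Subgraph) (hfin : Γ.verts.Finite) hcard =>
    (⟨hf1, hf, hinf, hn, hfin, hcard⟩ : ColumnWiring.Setup f n Γ).exists_wiring
  exact ⟨hwire, wirProfile_le_of_forall hwire⟩

/-- For `f n ≥ 2`, every finite subgraph of `X` with at most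
`N = (2^(2^(2n))·f n + 1)·f n` vertices admits a coarse `f n`-wiring into `Y` with
volume at most `2N`; consequently `wir^{f n}_{X→Y}(N) ≤ 2N`. -/
theorem statement4
    (f : ℕ → ℕ)
    (hsurj : ∀ k, 1 ≤ k → ∃ n, 1 ≤ n ∧ f n = k)
    (hf1 : f 1 = 1)
    (hf : ∀ n, 2 ≤ n → 2 ≤ f n ∧ f n ≤ n)
    (hinf : ∀ k, 2 ≤ k → {n | f n = k}.Infinite)
    (n : ℕ) (hn : 2 ≤ f n) :
    (∀ Γ : (Xtotal f).Subgraph, Γ.verts.Finite →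
        Γ.verts.ncard ≤ (2 ^ 2 ^ (2 * n) * f n + 1) * f n →
        ∃ Wr : Wiring Γ.coe (Ytotal f), Wr.IsCoarse (f n) ∧
          Wr.volume ≤ 2 * ((2 ^ 2 ^ (2 * n) * f n + 1) * f n)) ∧
      wirProfile (Xtotal f) (Ytotal f) (f n) ((2 ^ 2 ^ (2 * n) * f n + 1) * f n) ≤
        ((2 * ((2 ^ 2 ^ (2 * n) * f n + 1) * f n) : ℕ) : ℕ∞) :=
  statement4_general f hf1 hf hinf n hn
end

section
/- For every n with f(n) ≥ 2, if g is a coarse (f(n)−1)-wiring of X_n into Y, then the image of g is contained in a single connected component Y_m of Y with m ≥ n. -/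
open SimpleGraph

/-! The graph `X_n` is connected and every walk in `Y` stays in one component, so the image of a
wiring of `X_n` lies in a single `Y_m`. If `m < n`, then with `P = 2 ^ 2 ^ (2n-1)` the component
`Y_m` has at most `n (P n + 1)` vertices, while `X_n` has more than `P ^ 2` vertices; an
`(f n - 1)`-to-one vertex map would therefore need `n ^ 2 (n + 1) > P`, which fails for `n ≥ 2`. -/

open Set

theorem Set.ncard_Iio_prod_Iic (a b : ℕ) : (Iio a ×ˢ Iic b).ncard = a * (b + 1) := by
  rw [ncard_prod, ← Finset.coe_Iio, ← Finset.coe_Iic, ncard_coe_finset, ncard_coe_finset,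
    Nat.card_Iio, Nat.card_Iic]

theorem Nat.card_le_mul_ncard_of_fiber_le {V W : Type*} [Finite V] (φ : V → W) {k : ℕ}
    (hφ : ∀ w, {v | φ v = w}.ncard ≤ k) {S : Set W} (hS : S.Finite) (hmem : ∀ v, φ v ∈ S) :
    Nat.card V ≤ k * S.ncard := by
  classical
  have := Fintype.ofFinite V
  rw [Nat.card_eq_fintype_card, ← Finset.card_univ, ← hS.coe_toFinset, ncard_coe_finset]
  refine Finset.card_le_mul_card_image_of_maps_to (fun v _ ↦ by simpa using hmem v) k ?_
  intro w _
  simpa [← ncard_coe_finset] using hφ w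

theorem SimpleGraph.Reachable.eq_of_forall_adj {V α : Type*} {G : SimpleGraph V} {φ : V → α}
    (hφ : ∀ u v, G.Adj u v → φ u = φ v) {u v : V} (h : G.Reachable u v) : φ u = φ v := by
  obtain ⟨p⟩ := h
  induction p with
  | nil => rfl
  | cons ha _ ih => exact (hφ _ _ ha).trans ih

namespace Wiring

variable {V W : Type*} {G : SimpleGraph V} {H : SimpleGraph W}

theorem reachable_toFun (Wr : Wiring G H) {u v : V} (h : G.Reachable u v) :
    H.Reachable (Wr.toFun u) (Wr.toFun v) := by
  obtain ⟨p⟩ := h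
  induction p with
  | nil => rfl
  | cons ha _ ih => exact (Wr.walk _ _ ha).reachable.trans ih

theorem reachable_of_mem_imageVerts_s7 (Wr : Wiring G H) (hG : G.Preconnected) (v : V) {w : W}
    (hw : w ∈ Wr.imageVerts) : H.Reachable (Wr.toFun v) w := by
  classical
  rcases hw with ⟨u, rfl⟩ | ⟨u, u', ha, hw⟩
  · exact Wr.reachable_toFun (hG v u)
  · exact (Wr.reachable_toFun (hG v u)).trans ((Wr.walk u u' ha).takeUntil w hw).reachable

end Wiring

section Grids

variable {f : ℕ → ℕ} {n : ℕ}

theorem Xgraph_reachable_corner (hn : 0 < f n) (v : XVert f n) :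
    (Xgraph f n).Reachable v ⟨(0, 0), hn, Nat.zero_le _⟩ := by
  obtain ⟨⟨i, j⟩, hi, hj⟩ := v
  have down : ∀ j (hj : j ≤ 2 ^ 2 ^ (2 * n) * f n),
      (Xgraph f n).Reachable ⟨(i, j), hi, hj⟩ ⟨(i, 0), hi, Nat.zero_le _⟩ := by
    intro j
    induction j with
    | zero => exact fun _ ↦ .rfl
    | succ j ih =>
      intro hj
      have hadj : (Xgraph f n).Adj ⟨(i, j + 1), hi, hj⟩ ⟨(i, j), hi, by omega⟩ :=
        ⟨fun h ↦ j.succ_ne_self (congrArg (fun x : XVert f n ↦ x.val.2) h),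
          .inr (.inl ⟨rfl, rfl⟩)⟩
      exact hadj.reachable.trans (ih (by omega))
  have left : ∀ i (hi : i < f n),
      (Xgraph f n).Reachable ⟨(i, 0), hi, Nat.zero_le _⟩ ⟨(0, 0), hn, Nat.zero_le _⟩ := by
    intro i
    induction i with
    | zero => exact fun _ ↦ .rfl
    | succ i ih =>
      intro hi
      have hadj :
          (Xgraph f n).Adj ⟨(i + 1, 0), hi, Nat.zero_le _⟩ ⟨(i, 0), by omega, Nat.zero_le _⟩ :=
        ⟨fun h ↦ i.succ_ne_self (congrArg (fun x : XVert f n ↦ x.val.1) h),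
          .inr (.inr ⟨rfl, dvd_zero _, rfl⟩)⟩
      exact hadj.reachable.trans (ih (by omega))
  exact (down j hj).trans (left i hi)

theorem Xgraph_preconnected : (Xgraph f n).Preconnected := fun u v ↦
  have hn : 0 < f n := Nat.zero_lt_of_lt u.2.1
  (Xgraph_reachable_corner hn u).trans (Xgraph_reachable_corner hn v).symm

instance : Finite (XVert f n) :=
  ((finite_Iio (f n)).prod (finite_Iic (2 ^ 2 ^ (2 * n) * f n))).to_subtype

theorem card_XVert : Nat.card (XVert f n) = f n * (2 ^ 2 ^ (2 * n) * f n + 1) :=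
  ncard_Iio_prod_Iic _ _

theorem Ytotal_fst_eq_of_reachable {a b : YTVert f} (h : (Ytotal f).Reachable a b) :
    a.val.1 = b.val.1 :=
  h.eq_of_forall_adj (G := Ytotal f) fun _ _ hab ↦ hab.2.1

theorem YTVert_fst_eq_finite_and_ncard_le (m : ℕ) :
    {w : YTVert f | w.val.1 = m}.Finite ∧
      {w : YTVert f | w.val.1 = m}.ncard ≤ f m * (2 ^ 2 ^ (2 * m + 1) * f m + 1) := by
  have hmaps : MapsTo (fun w : YTVert f ↦ w.val.2) {w | w.val.1 = m}
      (Iio (f m) ×ˢ Iic (2 ^ 2 ^ (2 * m + 1) * f m)) := by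
    rintro w rfl
    exact w.2.2
  have hinj : InjOn (fun w : YTVert f ↦ w.val.2) {w | w.val.1 = m} := fun w hw w' hw' h ↦
    Subtype.ext (Prod.ext (hw.trans hw'.symm) h)
  have hfin : (Iio (f m) ×ˢ Iic (2 ^ 2 ^ (2 * m + 1) * f m)).Finite :=
    (finite_Iio _).prod (finite_Iic _)
  exact ⟨hfin.of_injOn hmaps hinj,
    (ncard_le_ncard_of_injOn _ hmaps hinj hfin).trans (ncard_Iio_prod_Iic _ _).le⟩

end Grids

theorem three_mul_add_one_lt_two_pow {n : ℕ} (hn : 2 ≤ n) : 3 * n + 1 < 2 ^ (2 * n - 1) := by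
  induction n, hn using Nat.le_induction with
  | base => norm_num
  | succ n hn ih =>
    rw [show 2 * (n + 1) - 1 = 2 * n - 1 + 2 by omega, pow_add]
    omega

theorem mul_self_mul_succ_lt_two_pow_two_pow {n : ℕ} (hn : 2 ≤ n) :
    n * n * (n + 1) < 2 ^ 2 ^ (2 * n - 1) :=
  calc n * n * (n + 1) ≤ 2 ^ n * 2 ^ n * 2 ^ (n + 1) := by
        gcongr <;> exact Nat.lt_two_pow_self.le
    _ = 2 ^ (3 * n + 1) := by rw [← pow_add, ← pow_add]; ring_nf
    _ < 2 ^ 2 ^ (2 * n - 1) := Nat.pow_lt_pow_right (by norm_num) (three_mul_add_one_lt_two_pow hn)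

theorem sub_one_mul_card_Y_lt_card_X {m n a k : ℕ} (hm : 1 ≤ m) (hmn : m < n) (ha : a ≤ n)
    (hk : 1 ≤ k) (hkn : k ≤ n) :
    (k - 1) * (a * (2 ^ 2 ^ (2 * m + 1) * a + 1)) < k * (2 ^ 2 ^ (2 * n) * k + 1) := by
  set P := 2 ^ 2 ^ (2 * n - 1)
  have hP : 1 ≤ P := Nat.one_le_two_pow
  have hQP : 2 ^ 2 ^ (2 * m + 1) ≤ P :=
    Nat.pow_le_pow_right (by norm_num) (Nat.pow_le_pow_right (by norm_num) (by omega))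
  have hPP : 2 ^ 2 ^ (2 * n) = P * P := by
    rw [show 2 * n = 2 * n - 1 + 1 by omega, pow_succ, pow_mul, sq]
  rw [hPP]
  calc (k - 1) * (a * (2 ^ 2 ^ (2 * m + 1) * a + 1))
      ≤ n * (n * (P * n + P)) := by gcongr; omega
    _ = n * n * (n + 1) * P := by ring
    _ < P * P := Nat.mul_lt_mul_of_pos_right (mul_self_mul_succ_lt_two_pow_two_pow (by omega)) hP
    _ < P * P * k + 1 := Nat.lt_succ_of_le (Nat.le_mul_of_pos_right _ hk)
    _ ≤ k * (P * P * k + 1) := Nat.le_mul_of_pos_left _ hk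

theorem statement7_general
    (f : ℕ → ℕ)
    (hf1 : f 1 = 1)
    (hf : ∀ n, 2 ≤ n → 2 ≤ f n ∧ f n ≤ n)
    (n : ℕ) (hn : 2 ≤ f n)
    (g : Wiring (Xgraph f n) (Ytotal f)) (hg : g.IsCoarse (f n - 1)) :
    ∃ m : ℕ, n ≤ m ∧ ∀ w ∈ g.imageVerts, w.val.1 = m := by
  set m := (g.toFun ⟨(0, 0), by omega, Nat.zero_le _⟩).val.1
  have himage : ∀ w ∈ g.imageVerts, w.val.1 = m := fun w hw ↦
    (Ytotal_fst_eq_of_reachable (g.reachable_of_mem_imageVerts_s7 Xgraph_preconnected _ hw)).symm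
  refine ⟨m, not_lt.mp fun hmn ↦ ?_, himage⟩
  have hm : 1 ≤ m := (g.toFun _).2.1
  have hfm : f m ≤ n := by
    rcases Nat.lt_or_ge m 2 with h | h
    · rw [show m = 1 by omega, hf1]
      omega
    · exact (hf m h).2.trans hmn.le
  obtain ⟨hfin, hlayer⟩ := YTVert_fst_eq_finite_and_ncard_le (f := f) m
  have hcount := Nat.card_le_mul_ncard_of_fiber_le g.toFun hg.1 hfin
    fun v ↦ himage _ (.inl ⟨v, rfl⟩)
  rw [card_XVert] at hcount
  exact (hcount.trans (Nat.mul_le_mul_left _ hlayer)).not_gt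
    (sub_one_mul_card_Y_lt_card_X hm hmn hfm (by omega) (hf n (by omega)).2)

/-- For `f n ≥ 2`, the image of any coarse `(f n - 1)`-wiring of `X_n`
into `Y` lies in a single connected component `Y_m` of `Y` with `m ≥ n`. -/
theorem statement7
    (f : ℕ → ℕ)
    (hsurj : ∀ k, 1 ≤ k → ∃ n, 1 ≤ n ∧ f n = k)
    (hf1 : f 1 = 1)
    (hf : ∀ n, 2 ≤ n → 2 ≤ f n ∧ f n ≤ n)
    (hinf : ∀ k, 2 ≤ k → {n | f n = k}.Infinite)
    (n : ℕ) (hn : 2 ≤ f n)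
    (g : Wiring (Xgraph f n) (Ytotal f)) (hg : g.IsCoarse (f n - 1)) :
    ∃ m : ℕ, n ≤ m ∧ ∀ w ∈ g.imageVerts, w.val.1 = m :=
  statement7_general f hf1 hf n hn g hg
end
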